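/- arXiv:2001.02325 — 10 statements merged into one kernel-verified Lean document; each statement's English description precedes it below -/
import Mathlib

section
/- Let q ≥ 2 and x ≥ 1 be integers. Define M : ℤ → ℚ by M(j) = (q−1)^j for j ≤ 0, M(1) = q, and M(j) = q·M(j−1) − (q−1)·M(j−2) + (q−1)^{x+1}·M(j−x−2) for all j ≥ 2. Then for every integer m ≥ 1, M(m) equals N_q(m,x), the number of admissible words of length m. -/
/-- A word `w` of length `m` over the alphabet `{0, ..., q-1}` (with `w ⟨m-1,_⟩` the
leftmost/most significant symbol) is admissible for the `Q^q_x` constraint if it contains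
no forbidden pattern `(q-1) δ^r (q-1)` with `1 ≤ r ≤ x` and each symbol of `δ^r` at most `q-2`. -/
def IsAdmissible (q x m : ℕ) (w : Fin m → Fin q) : Prop :=
  ∀ (i r : ℕ) (_hr1 : 1 ≤ r) (_hr2 : r ≤ x) (h : i + r + 1 < m),
    ¬((w ⟨i + r + 1, h⟩ : ℕ) = q - 1 ∧
      (w ⟨i, by omega⟩ : ℕ) = q - 1 ∧
      ∀ (j : ℕ) (_hj1 : 1 ≤ j) (_hj2 : j ≤ r), (w ⟨i + j, by omega⟩ : ℕ) ≤ q - 2)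

/-- `Nadm q x m` is the number of admissible words of length `m`. -/
noncomputable def Nadm (q x m : ℕ) : ℕ :=
  Nat.card {w : Fin m → Fin q // IsAdmissible q x m w}

/-- Lexicographic comparison of words of equal length: `w < w'` iff at the highest
index where they differ `w` has the smaller symbol. -/
def LexLt {q m : ℕ} (w w' : Fin m → Fin q) : Prop :=
  ∃ i : Fin m, w i < w' i ∧ ∀ j : Fin m, i < j → w j = w' j

/-- The lexicographic rank of a word among admissible words of its length. -/
noncomputable def rankOf (q x m : ℕ) (w : Fin m → Fin q) : ℕ :=
  Nat.card {v : Fin m → Fin q // IsAdmissible q x m v ∧ LexLt v w}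

/-!
Let `f r m` count the admissible words of length `m` whose first top symbol `q - 1`, reading from
`w₀`, sits at position `r`. Splitting off the symbol `w₀` gives
`N(m + 1) = (q - 1) N(m) + f 0 (m + 1)` and `f (r + 1) (m + 1) = (q - 1) f r m`, while a top symbol
can be prepended to an admissible word exactly when its first top symbol is not at a position in
`[1, x]`, so `f 0 (m + 1) = N(m) - ∑_{r=1}^{x} (q - 1)^r f 0 (m - r)`. Extending `N` by
`(q - 1)^j` to negative `j`, the difference `N(j) - (q - 1) N(j - 1)` is `f 0 j` for `j ≥ 1` and
vanishes for `j ≤ 0`, so the sum telescopes into the three-term recurrence defining `M`, which has only one solution with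
the given initial values.
-/

open Finset

section Cardinality

variable {α ι : Type*}

@[simp]
theorem Fin.cons_mk_zero {m : ℕ} (a : α) (w : Fin m → α) (h : 0 < m + 1) :
    (Fin.cons a w : Fin (m + 1) → α) ⟨0, h⟩ = a := rfl

@[simp]
theorem Fin.cons_mk_succ {m i : ℕ} (a : α) (w : Fin m → α) (h : i + 1 < m + 1) :
    (Fin.cons a w : Fin (m + 1) → α) ⟨i + 1, h⟩ = w ⟨i, Nat.lt_of_succ_lt_succ h⟩ := rfl

theorem card_subtype_fin_cons {m : ℕ} {P : (Fin (m + 1) → α) → Prop} {A : α → Prop}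
    {B : (Fin m → α) → Prop} (h : ∀ a w, P (Fin.cons a w) ↔ A a ∧ B w) :
    Nat.card {w // P w} = Nat.card {a // A a} * Nat.card {w // B w} := by
  rw [← Nat.card_prod, ← Nat.card_congr Equiv.subtypeProdEquivProd]
  exact Nat.card_congr ((Fin.consEquiv fun _ => α).subtypeEquiv fun p => (h p.1 p.2).symm).symm

theorem card_subtype_and_add_card_subtype_and_not [Finite α] (P Q : α → Prop) :
    Nat.card {a // P a ∧ Q a} + Nat.card {a // P a ∧ ¬Q a} = Nat.card {a // P a} := by
  classical
  rw [← Nat.card_congr (Equiv.subtypeSubtypeEquivSubtypeInter P Q),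
    ← Nat.card_congr (Equiv.subtypeSubtypeEquivSubtypeInter P (¬Q ·)), ← Nat.card_sum,
    Nat.card_congr (Equiv.sumCompl _)]

theorem card_subtype_exists_mem [Finite α] (P : α → Prop) (F : ι → α → Prop) (s : Finset ι)
    (hF : ∀ a r r', F r a → F r' a → r = r') :
    Nat.card {a // P a ∧ ∃ r ∈ s, F r a} = ∑ r ∈ s, Nat.card {a // P a ∧ F r a} := by
  classical
  have := Fintype.ofFinite α
  simp only [Nat.card_eq_fintype_card, Fintype.card_subtype]
  have hunion : univ.filter (fun a => P a ∧ ∃ r ∈ s, F r a)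
      = s.biUnion fun r => univ.filter fun a => P a ∧ F r a := by
    ext a
    simp only [mem_filter, mem_biUnion, mem_univ, true_and]
    tauto
  rw [hunion, card_biUnion]
  intro r _ r' _ hne
  simp only [Function.onFun, disjoint_left, mem_filter, mem_univ, true_and]
  exact fun a ha ha' => hne (hF a r r' ha.2 ha'.2)

end Cardinality

theorem eq_of_recurrence {α : Type*} {k : ℕ} {M M' : ℤ → α} (F : α → α → α → α)
    (h_init : ∀ j ≤ 1, M j = M' j)
    (hM : ∀ j, 2 ≤ j → M j = F (M (j - 1)) (M (j - 2)) (M (j - k - 2)))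
    (hM' : ∀ j, 2 ≤ j → M' j = F (M' (j - 1)) (M' (j - 2)) (M' (j - k - 2))) (j : ℤ) :
    M j = M' j := by
  suffices ∀ n : ℕ, ∀ j : ℤ, j ≤ n + 1 → M j = M' j from this j.toNat j (by omega)
  intro n
  induction n with
  | zero => simpa using h_init
  | succ n ih =>
    intro j hj
    rcases le_or_gt j (n + 1) with hj' | hj'
    · exact ih j hj'
    · rw [hM j (by omega), hM' j (by omega), ih (j - 1) (by omega), ih (j - 2) (by omega),
        ih (j - k - 2) (by omega)]

theorem sum_Icc_pow_mul_sub_mul {R : Type*} [CommRing R] (M : ℤ → R) (c : R) (j : ℤ) (k : ℕ) :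
    ∑ r ∈ Icc 1 k, c ^ r * (M (j - r) - c * M (j - r - 1)) =
      c * M (j - 1) - c ^ (k + 1) * M (j - k - 1) := by
  induction k with
  | zero => simp
  | succ k ih =>
    rw [sum_Icc_succ_top (by omega), ih]
    push_cast
    ring_nf

section AdmissibleWords

variable {q x : ℕ}

def FirstTopAt {m : ℕ} (r : ℕ) (w : Fin m → Fin q) : Prop :=
  ∃ h : r < m, (w ⟨r, h⟩ : ℕ) = q - 1 ∧ ∀ j (hj : j < r), (w ⟨j, hj.trans h⟩ : ℕ) ≤ q - 2

/-- Prepending a top symbol to `w` creates a forbidden pattern. -/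
def HasEarlyTop (x : ℕ) {m : ℕ} (w : Fin m → Fin q) : Prop :=
  ∃ r, 1 ≤ r ∧ r ≤ x ∧ FirstTopAt r w

theorem FirstTopAt.unique (hq : 2 ≤ q) {m r r' : ℕ} {w : Fin m → Fin q}
    (h : FirstTopAt r w) (h' : FirstTopAt r' w) : r = r' := by
  obtain ⟨_, htop, hbelow⟩ := h
  obtain ⟨_, htop', hbelow'⟩ := h'
  by_contra hne
  rcases Nat.lt_or_gt_of_ne hne with hlt | hlt
  · have := hbelow' r hlt
    omega
  · have := hbelow r' hlt
    omega

theorem not_firstTopAt_fin_zero (r : ℕ) (w : Fin 0 → Fin q) : ¬FirstTopAt r w :=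
  fun ⟨h, _⟩ => Nat.not_lt_zero r h

theorem firstTopAt_zero_cons_iff {m : ℕ} (a : Fin q) (w : Fin m → Fin q) :
    FirstTopAt 0 (Fin.cons a w) ↔ (a : ℕ) = q - 1 :=
  ⟨fun ⟨_, htop, _⟩ => htop,
    fun htop => ⟨m.succ_pos, htop, fun _ hj => absurd hj (Nat.not_lt_zero _)⟩⟩

theorem firstTopAt_succ_cons_iff {m r : ℕ} (a : Fin q) (w : Fin m → Fin q) :
    FirstTopAt (r + 1) (Fin.cons a w) ↔ (a : ℕ) ≤ q - 2 ∧ FirstTopAt r w := by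
  constructor
  · rintro ⟨hr, htop, hbelow⟩
    exact ⟨by simpa using hbelow 0 r.succ_pos, by omega, by simpa using htop,
      fun j hj => by simpa using hbelow (j + 1) (by omega)⟩
  · rintro ⟨ha, hr, htop, hbelow⟩
    refine ⟨by omega, by simpa using htop, fun j hj => ?_⟩
    cases j with
    | zero => simpa using ha
    | succ j => simpa using hbelow j (by omega)

theorem isAdmissible_cons_iff {m : ℕ} (a : Fin q) (w : Fin m → Fin q) :
    IsAdmissible q x (m + 1) (Fin.cons a w) ↔
      IsAdmissible q x m w ∧ ((a : ℕ) = q - 1 → ¬HasEarlyTop x w) := by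
  constructor
  · intro H
    refine ⟨fun i r hr1 hr2 h hpat => H (i + 1) r hr1 hr2 (by omega) ?_, ?_⟩
    · simpa [Nat.add_right_comm i 1] using hpat
    · rintro ha ⟨r, hr1, hr2, hr, htop, hbelow⟩
      refine H 0 r hr1 hr2 (by omega) ⟨by simpa using htop, by simpa using ha, fun j hj1 _ => ?_⟩
      obtain ⟨j, rfl⟩ := Nat.exists_eq_add_of_le' hj1
      simpa using hbelow j (by omega)
  · rintro ⟨Hw, Ha⟩ (_ | i) r hr1 hr2 h ⟨htop, ha, hbelow⟩
    · exact Ha ha ⟨r, hr1, hr2, by omega, by simpa using htop,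
        fun j _ => by simpa using hbelow (j + 1) (by omega) (by omega)⟩
    · exact Hw i r hr1 hr2 (by omega) ⟨by simpa [Nat.add_right_comm i 1] using htop, ha,
        fun j hj1 hj2 => by simpa [Nat.add_right_comm i 1] using hbelow j hj1 hj2⟩

theorem isAdmissible_of_lt_three {m : ℕ} (hm : m < 3) (w : Fin m → Fin q) :
    IsAdmissible q x m w :=
  fun _ _ hr1 _ h => absurd h (by omega)

theorem card_fin_val_le_sub_two (hq : 2 ≤ q) :
    Nat.card {a : Fin q // (a : ℕ) ≤ q - 2} = q - 1 := by
  have hlt (a : Fin q) : (a : ℕ) ≤ q - 2 ↔ (a : ℕ) < q - 1 := by omega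
  simp only [Nat.card_eq_fintype_card, Fintype.card_subtype, hlt, Fin.card_filter_val_lt]
  omega

theorem card_fin_val_eq_sub_one (hq : 0 < q) : Nat.card {a : Fin q // (a : ℕ) = q - 1} = 1 :=
  Nat.card_eq_one_iff_exists.2 ⟨⟨⟨q - 1, by omega⟩, rfl⟩, fun a => Subtype.ext (Fin.ext a.2)⟩

noncomputable def firstTopCount (q x r m : ℕ) : ℕ :=
  Nat.card {w : Fin m → Fin q // IsAdmissible q x m w ∧ FirstTopAt r w}

theorem Nadm_of_lt_three {m : ℕ} (hm : m < 3) : Nadm q x m = q ^ m := by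
  rw [Nadm, Nat.card_congr (Equiv.subtypeUnivEquiv (isAdmissible_of_lt_three hm))]
  simp

theorem Nadm_succ (hq : 2 ≤ q) (m : ℕ) :
    (q - 1) * Nadm q x m + firstTopCount q x 0 (m + 1) = Nadm q x (m + 1) := by
  have hnotop : Nat.card {w : Fin (m + 1) → Fin q // IsAdmissible q x (m + 1) w ∧ ¬FirstTopAt 0 w}
      = (q - 1) * Nadm q x m := by
    rw [card_subtype_fin_cons (A := fun a : Fin q => (a : ℕ) ≤ q - 2), card_fin_val_le_sub_two hq,
      Nadm]
    intro a w
    rw [isAdmissible_cons_iff, firstTopAt_zero_cons_iff]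
    have := a.isLt
    constructor
    · rintro ⟨⟨hw, -⟩, ha⟩
      exact ⟨by omega, hw⟩
    · rintro ⟨ha, hw⟩
      exact ⟨⟨hw, by omega⟩, by omega⟩
  rw [← hnotop, add_comm, firstTopCount]
  exact card_subtype_and_add_card_subtype_and_not _ _

theorem firstTopCount_zero_succ (hq : 0 < q) (m : ℕ) :
    firstTopCount q x 0 (m + 1) =
      Nat.card {w : Fin m → Fin q // IsAdmissible q x m w ∧ ¬HasEarlyTop x w} := by
  rw [firstTopCount, card_subtype_fin_cons (A := fun a : Fin q => (a : ℕ) = q - 1),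
    card_fin_val_eq_sub_one hq, one_mul]
  intro a w
  rw [isAdmissible_cons_iff, firstTopAt_zero_cons_iff]
  constructor
  · rintro ⟨⟨hw, hearly⟩, ha⟩
    exact ⟨ha, hw, hearly ha⟩
  · rintro ⟨ha, hw, hearly⟩
    exact ⟨⟨hw, fun _ => hearly⟩, ha⟩

theorem firstTopCount_succ_succ (hq : 2 ≤ q) (r m : ℕ) :
    firstTopCount q x (r + 1) (m + 1) = (q - 1) * firstTopCount q x r m := by
  rw [firstTopCount, card_subtype_fin_cons (A := fun a : Fin q => (a : ℕ) ≤ q - 2),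
    card_fin_val_le_sub_two hq, firstTopCount]
  intro a w
  rw [isAdmissible_cons_iff, firstTopAt_succ_cons_iff]
  constructor
  · rintro ⟨⟨hw, -⟩, ha, hr⟩
    exact ⟨ha, hw, hr⟩
  · rintro ⟨ha, hw, hr⟩
    exact ⟨⟨hw, by omega⟩, ha, hr⟩

theorem firstTopCount_fin_zero (r : ℕ) : firstTopCount q x r 0 = 0 :=
  have : IsEmpty {w : Fin 0 → Fin q // IsAdmissible q x 0 w ∧ FirstTopAt r w} :=
    ⟨fun w => not_firstTopAt_fin_zero r w.1 w.2.2⟩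
  Nat.card_of_isEmpty

theorem firstTopCount_eq_pow_mul (hq : 2 ≤ q) (r m : ℕ) :
    firstTopCount q x r m = (q - 1) ^ r * firstTopCount q x 0 (m - r) := by
  induction r generalizing m with
  | zero => simp
  | succ r ih =>
    cases m with
    | zero => simp [firstTopCount_fin_zero]
    | succ m =>
      rw [firstTopCount_succ_succ hq, ih, Nat.add_sub_add_right, pow_succ]
      ring

theorem firstTopCount_zero_succ_add_sum (hq : 2 ≤ q) (m : ℕ) :
    firstTopCount q x 0 (m + 1) + ∑ r ∈ Icc 1 x, (q - 1) ^ r * firstTopCount q x 0 (m - r) =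
      Nadm q x m := by
  have hearly : Nat.card {w : Fin m → Fin q // IsAdmissible q x m w ∧ HasEarlyTop x w} =
      ∑ r ∈ Icc 1 x, (q - 1) ^ r * firstTopCount q x 0 (m - r) := by
    simp_rw [← firstTopCount_eq_pow_mul hq, firstTopCount]
    rw [← card_subtype_exists_mem _ (fun r (w : Fin m → Fin q) => FirstTopAt r w) _
      fun _ _ _ => FirstTopAt.unique hq]
    simp only [HasEarlyTop, mem_Icc, and_assoc]
  rw [firstTopCount_zero_succ (by omega), ← hearly, add_comm]
  exact card_subtype_and_add_card_subtype_and_not _ _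

noncomputable def NadmExt (q x : ℕ) (j : ℤ) : ℚ :=
  if j < 0 then ((q : ℚ) - 1) ^ j else Nadm q x j.toNat

theorem NadmExt_natCast (m : ℕ) : NadmExt q x m = Nadm q x m := by
  simp [NadmExt]

theorem NadmExt_of_nonpos {j : ℤ} (hj : j ≤ 0) : NadmExt q x j = ((q : ℚ) - 1) ^ j := by
  rcases hj.lt_or_eq with hj | rfl
  · simp [NadmExt, hj]
  · simp [NadmExt, Nadm_of_lt_three]

theorem NadmExt_sub_mul_eq_firstTopCount (hq : 2 ≤ q) (j : ℤ) :
    NadmExt q x j - ((q : ℚ) - 1) * NadmExt q x (j - 1) = firstTopCount q x 0 j.toNat := by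
  rcases le_or_gt j 0 with hj | hj
  · have hne : (q : ℚ) - 1 ≠ 0 := by
      have : (2 : ℚ) ≤ q := by exact_mod_cast hq
      linarith
    rw [NadmExt_of_nonpos hj, NadmExt_of_nonpos (by omega), zpow_sub_one₀ hne,
      mul_comm (_ ^ j), mul_inv_cancel_left₀ hne, sub_self, Int.toNat_of_nonpos hj,
      firstTopCount_fin_zero, Nat.cast_zero]
  · obtain ⟨m, rfl⟩ : ∃ m : ℕ, j = m + 1 := ⟨j.toNat - 1, by omega⟩
    rw [add_sub_cancel_right, ← Nat.cast_succ, Int.toNat_natCast, NadmExt_natCast,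
      NadmExt_natCast, ← Nadm_succ hq m]
    push_cast [Nat.cast_sub (by omega : 1 ≤ q)]
    ring

theorem NadmExt_succ (hq : 2 ≤ q) (m : ℕ) :
    NadmExt q x (m + 1) = q * NadmExt q x m - ∑ r ∈ Icc 1 x,
      ((q : ℚ) - 1) ^ r * (NadmExt q x (m - r) - ((q : ℚ) - 1) * NadmExt q x (m - r - 1)) := by
  simp_rw [NadmExt_sub_mul_eq_firstTopCount hq, Int.toNat_sub]
  rw [← Nat.cast_succ, NadmExt_natCast, NadmExt_natCast, ← Nadm_succ hq m,
    ← firstTopCount_zero_succ_add_sum hq m]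
  push_cast [Nat.cast_sub (by omega : 1 ≤ q)]
  ring

theorem NadmExt_recurrence (hq : 2 ≤ q) {j : ℤ} (hj : 1 ≤ j) :
    NadmExt q x j = q * NadmExt q x (j - 1) - ((q : ℚ) - 1) * NadmExt q x (j - 2)
      + ((q : ℚ) - 1) ^ (x + 1) * NadmExt q x (j - x - 2) := by
  obtain ⟨m, rfl⟩ : ∃ m : ℕ, j = m + 1 := ⟨j.toNat - 1, by omega⟩
  rw [NadmExt_succ hq, sum_Icc_pow_mul_sub_mul]
  ring_nf

end AdmissibleWords

theorem stmt_0_general (q x : ℕ) (hq : 2 ≤ q) (M : ℤ → ℚ)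
    (hMneg : ∀ j : ℤ, j ≤ 0 → M j = ((q : ℚ) - 1) ^ j)
    (hM1 : M 1 = q)
    (hMrec : ∀ j : ℤ, 2 ≤ j →
      M j = q * M (j - 1) - ((q : ℚ) - 1) * M (j - 2)
            + ((q : ℚ) - 1) ^ (x + 1) * M (j - (x : ℤ) - 2)) :
    ∀ m : ℕ, 1 ≤ m → M m = Nadm q x m := by
  have h_init : ∀ j ≤ 1, M j = NadmExt q x j := by
    intro j hj
    rcases hj.lt_or_eq with hj | rfl
    · rw [hMneg j (by omega), NadmExt_of_nonpos (by omega)]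
    · rw [hM1, ← Nat.cast_one, NadmExt_natCast, Nadm_of_lt_three (by omega), pow_one]
  intro m _
  rw [eq_of_recurrence (fun u v w => q * u - ((q : ℚ) - 1) * v + ((q : ℚ) - 1) ^ (x + 1) * w)
    h_init hMrec fun j hj => NadmExt_recurrence hq (by omega), NadmExt_natCast]

/-- the recursively defined `M` agrees with the count of admissible words. -/
theorem stmt_0 (q x : ℕ) (hq : 2 ≤ q) (hx : 1 ≤ x) (M : ℤ → ℚ)
    (hMneg : ∀ j : ℤ, j ≤ 0 → M j = ((q : ℚ) - 1) ^ j)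
    (hM1 : M 1 = q)
    (hMrec : ∀ j : ℤ, 2 ≤ j →
      M j = q * M (j - 1) - ((q : ℚ) - 1) * M (j - 2)
            + ((q : ℚ) - 1) ^ (x + 1) * M (j - (x : ℤ) - 2)) :
    ∀ m : ℕ, 1 ≤ m → M m = Nadm q x m :=
  stmt_0_general q x hq M hMneg hM1 hMrec
end

section
/- For all integers q ≥ 2, x ≥ 1, and m ≥ x+3, the counts of admissible words satisfy the recursion N_q(m,x) = q·N_q(m−1,x) − (q−1)·N_q(m−2,x) + (q−1)^{x+1}·N_q(m−x−2,x). -/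
lemma fin_app_congr {n q : ℕ} (w : Fin n → Fin q) {i j : ℕ} (h : i = j) (hi : i < n) :
    w ⟨i, hi⟩ = w ⟨j, h ▸ hi⟩ := by subst h; rfl

lemma snoc_mk_lt {n q : ℕ} (w : Fin n → Fin q) (a : Fin q) {i : ℕ} (h : i < n)
    (h' : i < n + 1) : (Fin.snoc w a : Fin (n+1) → Fin q) ⟨i, h'⟩ = w ⟨i, h⟩ := by
  have he : (⟨i, h'⟩ : Fin (n + 1)) = Fin.castSucc ⟨i, h⟩ := rfl
  rw [he, Fin.snoc_castSucc]

lemma snoc_mk_last {n q : ℕ} (w : Fin n → Fin q) (a : Fin q) {i : ℕ} (hi : i = n)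
    (h' : i < n + 1) : (Fin.snoc w a : Fin (n+1) → Fin q) ⟨i, h'⟩ = a := by
  have he : (⟨i, h'⟩ : Fin (n + 1)) = Fin.last n := Fin.ext (by simpa using hi)
  rw [he, Fin.snoc_last]

def TopSafe (q lo hi n : ℕ) (w : Fin n → Fin q) : Prop :=
  ∀ (r : ℕ) (_h1 : lo ≤ r) (_h2 : r ≤ hi) (h : r < n),
    ¬((w ⟨n - 1 - r, by omega⟩ : ℕ) = q - 1 ∧
      ∀ (j : ℕ) (_hj1 : 1 ≤ j) (_hj2 : j ≤ r), (w ⟨n - 1 - r + j, by omega⟩ : ℕ) ≤ q - 2)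

noncomputable def Msafe (q x lo hi n : ℕ) : ℕ :=
  Nat.card {w : Fin n → Fin q // IsAdmissible q x n w ∧ TopSafe q lo hi n w}

lemma card_snocSplit {q n : ℕ} (P : (Fin (n + 1) → Fin q) → Prop) :
    Nat.card {v : Fin (n + 1) → Fin q // P v}
      = ∑ a : Fin q, Nat.card {w : Fin n → Fin q // P (Fin.snoc w a)} := by
  have e1 : {v : Fin (n + 1) → Fin q // P v}
      ≃ {p : Fin q × (Fin n → Fin q) // P (Fin.snoc p.2 p.1)} :=
    ((Fin.snocEquiv (fun _ => Fin q)).subtypeEquiv (fun p => Iff.rfl)).symm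
  have e2 := Equiv.subtypeProdEquivSigmaSubtype
    (fun (a : Fin q) (w : Fin n → Fin q) => P (Fin.snoc w a))
  rw [Nat.card_congr (e1.trans e2)]
  letI : ∀ a : Fin q, Fintype {w : Fin n → Fin q // P (Fin.snoc w a)} :=
    fun _ => Fintype.ofFinite _
  rw [Nat.card_eq_fintype_card, Fintype.card_sigma]
  exact Finset.sum_congr rfl fun a _ => (Nat.card_eq_fintype_card).symm

lemma sum_top {q : ℕ} (hq : 2 ≤ q) (f : Fin q → ℕ) (c : ℕ)
    (h : ∀ a : Fin q, (a : ℕ) ≠ q - 1 → f a = c) :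
    ∑ a : Fin q, f a = f ⟨q - 1, by omega⟩ + (q - 1) * c := by
  classical
  rw [← Finset.add_sum_erase Finset.univ f (Finset.mem_univ (⟨q - 1, by omega⟩ : Fin q))]
  congr 1
  have hc : ∀ a ∈ Finset.univ.erase (⟨q - 1, by omega⟩ : Fin q), f a = c := by
    intro a ha
    apply h
    intro hval
    exact (Finset.ne_of_mem_erase ha) (Fin.ext hval)
  rw [Finset.sum_congr rfl hc, Finset.sum_const, smul_eq_mul,
      Finset.card_erase_of_mem (Finset.mem_univ _), Finset.card_univ, Fintype.card_fin]

lemma adm_snoc_of_ne {q x n : ℕ} {a : Fin q} (ha : (a : ℕ) ≠ q - 1) (w : Fin n → Fin q) :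
    IsAdmissible q x (n + 1) (Fin.snoc w a) ↔ IsAdmissible q x n w := by
  constructor
  · intro H i r hr1 hr2 h hbad
    refine H i r hr1 hr2 (by omega) ⟨?_, ?_, ?_⟩
    · rw [snoc_mk_lt w a h]; exact hbad.1
    · rw [snoc_mk_lt w a (show i < n by omega)]; exact hbad.2.1
    · intro j hj1 hj2
      rw [snoc_mk_lt w a (show i + j < n by omega)]
      exact hbad.2.2 j hj1 hj2
  · intro H i r hr1 hr2 h hbad
    by_cases hi : i + r + 1 = n
    · rw [snoc_mk_last w a hi] at hbad
      exact ha hbad.1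
    · refine H i r hr1 hr2 (by omega) ⟨?_, ?_, ?_⟩
      · rw [← snoc_mk_lt w a (show i + r + 1 < n by omega) (by omega)]; exact hbad.1
      · rw [← snoc_mk_lt w a (show i < n by omega) (by omega)]; exact hbad.2.1
      · intro j hj1 hj2
        rw [← snoc_mk_lt w a (show i + j < n by omega) (by omega)]
        exact hbad.2.2 j hj1 hj2

lemma adm_snoc_top {q x n : ℕ} {a : Fin q} (ha : (a : ℕ) = q - 1) (w : Fin n → Fin q) :
    IsAdmissible q x (n + 1) (Fin.snoc w a) ↔ IsAdmissible q x n w ∧ TopSafe q 1 x n w := by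
  constructor
  · intro H
    constructor
    · intro i r hr1 hr2 h hbad
      refine H i r hr1 hr2 (by omega) ⟨?_, ?_, ?_⟩
      · rw [snoc_mk_lt w a h]; exact hbad.1
      · rw [snoc_mk_lt w a (show i < n by omega)]; exact hbad.2.1
      · intro j hj1 hj2
        rw [snoc_mk_lt w a (show i + j < n by omega)]
        exact hbad.2.2 j hj1 hj2
    · intro r hr1 hr2 h hbad
      refine H (n - 1 - r) r hr1 hr2 (by omega) ⟨?_, ?_, ?_⟩
      · rw [snoc_mk_last w a (by omega)]; exact ha
      · rw [snoc_mk_lt w a (show n - 1 - r < n by omega)]; exact hbad.1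
      · intro j hj1 hj2
        rw [snoc_mk_lt w a (show n - 1 - r + j < n by omega)]
        exact hbad.2 j hj1 hj2
  · rintro ⟨H1, H2⟩ i r hr1 hr2 h hbad
    by_cases hi : i + r + 1 = n
    · refine H2 r hr1 hr2 (by omega) ⟨?_, ?_⟩
      · rw [fin_app_congr w (show n - 1 - r = i by omega),
            ← snoc_mk_lt w a (show i < n by omega) (by omega)]
        exact hbad.2.1
      · intro j hj1 hj2
        rw [fin_app_congr w (show n - 1 - r + j = i + j by omega),
            ← snoc_mk_lt w a (show i + j < n by omega) (by omega)]
        exact hbad.2.2 j hj1 hj2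
    · refine H1 i r hr1 hr2 (by omega) ⟨?_, ?_, ?_⟩
      · rw [← snoc_mk_lt w a (show i + r + 1 < n by omega) (by omega)]; exact hbad.1
      · rw [← snoc_mk_lt w a (show i < n by omega) (by omega)]; exact hbad.2.1
      · intro j hj1 hj2
        rw [← snoc_mk_lt w a (show i + j < n by omega) (by omega)]
        exact hbad.2.2 j hj1 hj2

lemma topSafe_snoc_top {q n hi' : ℕ} (hq : 2 ≤ q) {a : Fin q} (ha : (a : ℕ) = q - 1)
    (w : Fin n → Fin q) : TopSafe q 1 hi' (n + 1) (Fin.snoc w a) := by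
  intro r hr1 hr2 h hbad
  have hle := hbad.2 r (by omega) (le_refl r)
  rw [fin_app_congr (Fin.snoc w a : Fin (n+1) → Fin q) (show n + 1 - 1 - r + r = n by omega),
      snoc_mk_last w a rfl] at hle
  omega

lemma not_topSafe_snoc_zero {q n hi' : ℕ} {a : Fin q} (ha : (a : ℕ) = q - 1)
    (w : Fin n → Fin q) : ¬ TopSafe q 0 hi' (n + 1) (Fin.snoc w a) := by
  intro H
  refine H 0 (Nat.zero_le _) (Nat.zero_le _) (by omega) ⟨?_, ?_⟩
  · rw [snoc_mk_last w a (show n + 1 - 1 - 0 = n by omega)]; exact ha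
  · intro j hj1 hj2; omega

lemma topSafe_zero_zero_snoc {q n : ℕ} {a : Fin q} (ha : (a : ℕ) ≠ q - 1)
    (w : Fin n → Fin q) : TopSafe q 0 0 (n + 1) (Fin.snoc w a) := by
  intro r hr0 hr2 h hbad
  have hr : r = 0 := by omega
  subst hr
  rw [snoc_mk_last w a (show n + 1 - 1 - 0 = n by omega)] at hbad
  exact ha hbad.1

lemma topSafe_snoc_shift {q n lo hi : ℕ} (hlo : lo ≤ 1) (hhi : 1 ≤ hi) {a : Fin q}
    (ha : (a : ℕ) ≠ q - 1) (w : Fin n → Fin q) :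
    TopSafe q lo hi (n + 1) (Fin.snoc w a) ↔ TopSafe q 0 (hi - 1) n w := by
  have haq : (a : ℕ) < q := a.isLt
  constructor
  · intro H r hr0 hr2 h hbad
    refine H (r + 1) (by omega) (by omega) (by omega) ⟨?_, ?_⟩
    · rw [snoc_mk_lt w a (show n + 1 - 1 - (r + 1) < n by omega),
          fin_app_congr w (show n + 1 - 1 - (r + 1) = n - 1 - r by omega)]
      exact hbad.1
    · intro j hj1 hj2
      by_cases hj : j = r + 1
      · subst hj
        rw [snoc_mk_last w a (by omega)]
        omega
      · rw [snoc_mk_lt w a (show n + 1 - 1 - (r + 1) + j < n by omega),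
            fin_app_congr w (show n + 1 - 1 - (r + 1) + j = n - 1 - r + j by omega)]
        exact hbad.2 j hj1 (by omega)
  · intro H r hrlo hrhi h hbad
    rcases Nat.eq_zero_or_pos r with hr0 | hr1
    · subst hr0
      rw [snoc_mk_last w a (show n + 1 - 1 - 0 = n by omega)] at hbad
      exact ha hbad.1
    · refine H (r - 1) (Nat.zero_le _) (by omega) (by omega) ⟨?_, ?_⟩
      · rw [fin_app_congr w (show n - 1 - (r - 1) = n + 1 - 1 - r by omega),
            ← snoc_mk_lt w a (show n + 1 - 1 - r < n by omega) (by omega)]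
        exact hbad.1
      · intro j hj1 hj2
        rw [fin_app_congr w (show n - 1 - (r - 1) + j = n + 1 - 1 - r + j by omega),
            ← snoc_mk_lt w a (show n + 1 - 1 - r + j < n by omega) (by omega)]
        exact hbad.2 j hj1 (by omega)

lemma count_split {q n : ℕ} (hq : 2 ≤ q) (P : (Fin (n + 1) → Fin q) → Prop)
    (Ptop Poth : (Fin n → Fin q) → Prop)
    (htop : ∀ w, P (Fin.snoc w ⟨q - 1, by omega⟩) ↔ Ptop w)
    (hoth : ∀ (a : Fin q), (a : ℕ) ≠ q - 1 → ∀ w, (P (Fin.snoc w a) ↔ Poth w)) :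
    Nat.card {v : Fin (n + 1) → Fin q // P v}
      = Nat.card {w // Ptop w} + (q - 1) * Nat.card {w // Poth w} := by
  rw [card_snocSplit P, sum_top hq _ (Nat.card {w // Poth w})
      (fun a ha => Nat.card_congr (Equiv.subtypeEquivRight (hoth a ha)))]
  congr 1
  exact Nat.card_congr (Equiv.subtypeEquivRight htop)

lemma countC1 {q x : ℕ} (hq : 2 ≤ q) (n : ℕ) :
    Nadm q x (n + 1) = Msafe q x 1 x n + (q - 1) * Nadm q x n :=
  count_split hq (IsAdmissible q x (n + 1))
    (fun w => IsAdmissible q x n w ∧ TopSafe q 1 x n w) (IsAdmissible q x n)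
    (fun w => adm_snoc_top rfl w) (fun _ ha w => adm_snoc_of_ne ha w)

lemma countC2 {q x : ℕ} (hq : 2 ≤ q) (hx : 1 ≤ x) (n : ℕ) :
    Msafe q x 1 x (n + 1) = Msafe q x 1 x n + (q - 1) * Msafe q x 0 (x - 1) n :=
  count_split hq
    (fun v => IsAdmissible q x (n + 1) v ∧ TopSafe q 1 x (n + 1) v)
    (fun w => IsAdmissible q x n w ∧ TopSafe q 1 x n w)
    (fun w => IsAdmissible q x n w ∧ TopSafe q 0 (x - 1) n w)
    (fun w => ⟨fun h => (adm_snoc_top rfl w).1 h.1,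
      fun h => ⟨(adm_snoc_top rfl w).2 h, topSafe_snoc_top hq rfl w⟩⟩)
    (fun a ha w => and_congr (adm_snoc_of_ne ha w) (topSafe_snoc_shift (le_refl 1) hx ha w))

lemma countC3 {q x : ℕ} (hq : 2 ≤ q) (b n : ℕ) (hb : 1 ≤ b) :
    Msafe q x 0 b (n + 1) = (q - 1) * Msafe q x 0 (b - 1) n := by
  have e := count_split hq
    (fun v => IsAdmissible q x (n + 1) v ∧ TopSafe q 0 b (n + 1) v)
    (fun _ => False)
    (fun w => IsAdmissible q x n w ∧ TopSafe q 0 (b - 1) n w)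
    (fun w => ⟨fun h => not_topSafe_snoc_zero rfl w h.2, False.elim⟩)
    (fun a ha w => and_congr (adm_snoc_of_ne ha w) (topSafe_snoc_shift (Nat.zero_le 1) hb ha w))
  have h0 : Nat.card {w : Fin n → Fin q // False} = 0 := by
    haveI : IsEmpty {w : Fin n → Fin q // False} := ⟨fun s => s.2⟩
    exact Nat.card_of_isEmpty
  rw [Msafe, e, h0, zero_add]
  rfl

lemma countC4 {q x : ℕ} (hq : 2 ≤ q) (n : ℕ) :
    Msafe q x 0 0 (n + 1) = (q - 1) * Nadm q x n := by
  have e := count_split hq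
    (fun v => IsAdmissible q x (n + 1) v ∧ TopSafe q 0 0 (n + 1) v)
    (fun _ => False)
    (IsAdmissible q x n)
    (fun w => ⟨fun h => not_topSafe_snoc_zero rfl w h.2, False.elim⟩)
    (fun a ha w => ⟨fun h => (adm_snoc_of_ne ha w).1 h.1,
      fun h => ⟨(adm_snoc_of_ne ha w).2 h, topSafe_zero_zero_snoc ha w⟩⟩)
  have h0 : Nat.card {w : Fin n → Fin q // False} = 0 := by
    haveI : IsEmpty {w : Fin n → Fin q // False} := ⟨fun s => s.2⟩
    exact Nat.card_of_isEmpty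
  rw [Msafe, e, h0, zero_add]
  rfl

lemma mclosed {q x : ℕ} (hq : 2 ≤ q) (k : ℕ) : ∀ n : ℕ,
    Msafe q x 0 k (n + k + 1) = (q - 1) ^ (k + 1) * Nadm q x n := by
  induction k with
  | zero => intro n; rw [pow_one]; exact countC4 hq n
  | succ k ih =>
      intro n
      rw [show n + (k + 1) + 1 = (n + k + 1) + 1 by omega,
          countC3 hq (k + 1) (n + k + 1) (by omega), Nat.add_sub_cancel, ih n]
      ring

/-- the recursion satisfied by the counts of admissible words. -/
theorem stmt_1 (q x m : ℕ) (hq : 2 ≤ q) (hx : 1 ≤ x) (hm : x + 3 ≤ m) :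
    (Nadm q x m : ℤ) =
      q * Nadm q x (m - 1) - ((q : ℤ) - 1) * Nadm q x (m - 2)
        + ((q : ℤ) - 1) ^ (x + 1) * Nadm q x (m - x - 2) := by
  obtain ⟨t, rfl⟩ : ∃ t, m = x + t + 3 := ⟨m - x - 3, by omega⟩
  obtain ⟨Q, rfl⟩ : ∃ Q, q = Q + 1 := ⟨q - 1, by omega⟩
  have hA := countC1 (q := Q + 1) (x := x) hq (x + t + 2)
  have hD := countC1 (q := Q + 1) (x := x) hq (x + t + 1)
  have hB := countC2 (q := Q + 1) hq hx (x + t + 1)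
  have hC := mclosed (q := Q + 1) (x := x) hq (x - 1) (t + 1)
  rw [show (t + 1) + (x - 1) + 1 = x + t + 1 by omega, show (x - 1) + 1 = x by omega] at hC
  simp only [Nat.add_sub_cancel] at hA hB hC hD
  rw [show x + t + 2 + 1 = x + t + 3 by omega] at hA
  rw [show x + t + 1 + 1 = x + t + 2 by omega] at hD hB
  rw [show x + t + 3 - 1 = x + t + 2 by omega, show x + t + 3 - 2 = x + t + 1 by omega,
      show x + t + 3 - x - 2 = t + 1 by omega]
  zify at hA hB hC hD
  push_cast
  linear_combination hA + hB + (Q : ℤ) * hC - hD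
end

section
/- For all integers q ≥ 2, x ≥ 1, and m ≥ 2, the number of admissible words of length m whose leftmost symbol is at most q−2 equals (q−1)·N_q(m−1,x). -/
theorem isAdmissible_snoc_iff {q x n : ℕ} {w : Fin n → Fin q} {a : Fin q}
    (ha : (a : ℕ) ≠ q - 1) :
    IsAdmissible q x (n + 1) (Fin.snoc w a) ↔ IsAdmissible q x n w := by
  constructor
  · rintro h i r hr1 hr2 hi ⟨hlast, hfirst, hmid⟩
    refine h i r hr1 hr2 (by omega) ⟨?_, ?_, fun j hj1 hj2 => ?_⟩
    · simpa [Fin.snoc, hi] using hlast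
    · simpa [Fin.snoc, show i < n by omega] using hfirst
    · simpa [Fin.snoc, show i + j < n by omega] using hmid j hj1 hj2
  · rintro h i r hr1 hr2 hi ⟨hlast, hfirst, hmid⟩
    obtain hi' | rfl : i + r + 1 < n ∨ i + r + 1 = n := by omega
    · refine h i r hr1 hr2 hi' ⟨?_, ?_, fun j hj1 hj2 => ?_⟩
      · simpa [Fin.snoc, hi'] using hlast
      · simpa [Fin.snoc, show i < n by omega] using hfirst
      · simpa [Fin.snoc, show i + j < n by omega] using hmid j hj1 hj2
    · exact ha (by simpa [Fin.snoc] using hlast)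

theorem Fin.card_subtype_val_le_sub_two {q : ℕ} (hq : 2 ≤ q) :
    Nat.card {a : Fin q // (a : ℕ) ≤ q - 2} = q - 1 := by
  have hlt : ∀ a : Fin q, (a : ℕ) ≤ q - 2 ↔ (a : ℕ) < q - 1 := fun a => by omega
  simp only [hlt, Nat.card_eq_fintype_card, Fintype.card_subtype, Fin.card_filter_val_lt]
  omega

def admissibleSnocEquiv {q : ℕ} (hq : 2 ≤ q) (x n : ℕ) :
    {a : Fin q // (a : ℕ) ≤ q - 2} × {v : Fin n → Fin q // IsAdmissible q x n v} ≃
      {w : Fin (n + 1) → Fin q //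
        IsAdmissible q x (n + 1) w ∧ (w (Fin.last n) : ℕ) ≤ q - 2} :=
  Equiv.subtypeProdEquivProd.symm.trans <|
    (Fin.snocEquiv fun _ => Fin q).subtypeEquiv fun ⟨a, v⟩ => by
      simp only [Fin.snocEquiv, Equiv.coe_fn_mk, Fin.snoc_last, and_comm (a := (a : ℕ) ≤ q - 2)]
      exact and_congr_left fun ha => (isAdmissible_snoc_iff (by omega)).symm

theorem card_admissible_last_le_sub_two {q : ℕ} (hq : 2 ≤ q) (x n : ℕ) :
    Nat.card {w : Fin (n + 1) → Fin q //
        IsAdmissible q x (n + 1) w ∧ (w (Fin.last n) : ℕ) ≤ q - 2} =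
      (q - 1) * Nadm q x n := by
  rw [Nadm, ← Fin.card_subtype_val_le_sub_two hq, ← Nat.card_prod]
  exact (Nat.card_congr (admissibleSnocEquiv hq x n)).symm

/-- counting admissible words whose leftmost symbol is at most `q-2`. -/
theorem stmt_2 (q x m : ℕ) (hq : 2 ≤ q) (hm : 2 ≤ m) :
    Nat.card {w : Fin m → Fin q //
        IsAdmissible q x m w ∧ (w ⟨m - 1, by omega⟩ : ℕ) ≤ q - 2} =
      (q - 1) * Nadm q x (m - 1) := by
  obtain ⟨n, rfl⟩ : ∃ n, m = n + 1 := ⟨m - 1, by omega⟩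
  exact card_admissible_last_le_sub_two hq x n
end

section
/- For all integers q ≥ 2, x ≥ 1, and m ≥ 2, the number of admissible words of length m whose two leftmost symbols both equal q−1 equals N_q(m−1,x) − (q−1)·N_q(m−2,x). -/
section Aux

variable {q x n : ℕ}

def tail' (w : Fin n → Fin q) : Fin (n-1) → Fin q :=
  fun i => w ⟨i, by omega⟩

def cons' (c : Fin q) (v : Fin (n-1) → Fin q) : Fin n → Fin q :=
  fun i => if h : (i : ℕ) < n - 1 then v ⟨i, h⟩ else c

lemma cons'_apply_lt (c : Fin q) (v : Fin (n-1) → Fin q) {k : ℕ} (hk' : k < n)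
    (hk : k < n - 1) : cons' c v ⟨k, hk'⟩ = v ⟨k, hk⟩ := dif_pos hk

lemma cons'_apply_last (c : Fin q) (v : Fin (n-1) → Fin q) {k : ℕ} (hk' : k < n)
    (hk : ¬ k < n - 1) : cons' c v ⟨k, hk'⟩ = c := dif_neg hk

lemma tail'_cons' (c : Fin q) (v : Fin (n-1) → Fin q) : tail' (cons' c v) = v := by
  funext i
  show cons' c v ⟨i, _⟩ = v i
  rw [cons'_apply_lt c v _ i.isLt]

lemma cons'_eq_self (hn : 1 ≤ n) (w : Fin n → Fin q) :
    cons' (w ⟨n-1, by omega⟩) (tail' w) = w := by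
  funext i
  by_cases h : (i : ℕ) < n - 1
  · show cons' _ _ ⟨i, i.isLt⟩ = w i
    rw [cons'_apply_lt _ _ _ h]
    exact congrArg w (Fin.ext rfl)
  · show cons' _ _ ⟨i, i.isLt⟩ = w i
    rw [cons'_apply_last _ _ _ h]
    have hi := i.isLt
    exact congrArg w (Fin.ext (show n - 1 = (i : ℕ) by omega))

lemma adm_tail {w : Fin n → Fin q} (hw : IsAdmissible q x n w) :
    IsAdmissible q x (n-1) (tail' w) := by
  intro i r hr1 hr2 h
  exact hw i r hr1 hr2 (by omega)

lemma adm_cons_small {c : Fin q} (hc : (c : ℕ) ≠ q - 1)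
    {v : Fin (n-1) → Fin q} (hv : IsAdmissible q x (n-1) v) :
    IsAdmissible q x n (cons' c v) := by
  intro i r hr1 hr2 h
  rintro ⟨h1, h2, h3⟩
  by_cases htop : i + r + 1 < n - 1
  · refine hv i r hr1 hr2 htop ⟨?_, ?_, ?_⟩
    · rw [← cons'_apply_lt c v h htop]; exact h1
    · rw [← cons'_apply_lt c v (by omega) (by omega : i < n - 1)]; exact h2
    · intro j hj1 hj2
      rw [← cons'_apply_lt c v (by omega) (by omega : i + j < n - 1)]
      exact h3 j hj1 hj2
  · rw [cons'_apply_last c v h htop] at h1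
    exact hc h1

lemma adm_cons_top2 (hq : 2 ≤ q) (hn : 2 ≤ n) {c : Fin q} (hc : (c : ℕ) = q - 1)
    {v : Fin (n-1) → Fin q} (hv : IsAdmissible q x (n-1) v)
    (hv2 : (v ⟨n - 1 - 1, by omega⟩ : ℕ) = q - 1) :
    IsAdmissible q x n (cons' c v) := by
  intro i r hr1 hr2 h
  rintro ⟨h1, h2, h3⟩
  by_cases htop : i + r + 1 < n - 1
  · refine hv i r hr1 hr2 htop ⟨?_, ?_, ?_⟩
    · rw [← cons'_apply_lt c v h htop]; exact h1
    · rw [← cons'_apply_lt c v (by omega) (by omega : i < n - 1)]; exact h2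
    · intro j hj1 hj2
      rw [← cons'_apply_lt c v (by omega) (by omega : i + j < n - 1)]
      exact h3 j hj1 hj2
  · have hr := h3 r hr1 le_rfl
    rw [cons'_apply_lt c v (by omega) (by omega : i + r < n - 1)] at hr
    have : (⟨i + r, by omega⟩ : Fin (n-1)) = ⟨n - 1 - 1, by omega⟩ :=
      Fin.ext (show i + r = n - 1 - 1 by omega)
    rw [this, hv2] at hr
    omega

noncomputable def equivSplit (q x n : ℕ) (hn : 1 ≤ n) :
    {w : Fin n → Fin q // IsAdmissible q x n w ∧ (w ⟨n-1, by omega⟩ : ℕ) ≠ q - 1} ≃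
      {c : Fin q // (c : ℕ) ≠ q - 1} × {v : Fin (n-1) → Fin q // IsAdmissible q x (n-1) v} where
  toFun w := (⟨w.1 ⟨n-1, by omega⟩, w.2.2⟩, ⟨tail' w.1, adm_tail w.2.1⟩)
  invFun p := ⟨cons' p.1.1 p.2.1, adm_cons_small p.1.2 p.2.2,
    by rw [cons'_apply_last p.1.1 p.2.1 (by omega) (by omega)]; exact p.1.2⟩
  left_inv w := Subtype.ext (cons'_eq_self hn w.1)
  right_inv p := by
    refine Prod.ext (Subtype.ext ?_) (Subtype.ext (tail'_cons' p.1.1 p.2.1))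
    exact cons'_apply_last p.1.1 p.2.1 (by omega) (by omega)

def equivFinq (hq : 1 ≤ q) : {c : Fin q // (c : ℕ) ≠ q - 1} ≃ Fin (q - 1) where
  toFun c := ⟨c.1, by have := c.1.isLt; have := c.2; omega⟩
  invFun i := ⟨⟨i.1, by omega⟩, by have := i.isLt; simp; omega⟩
  left_inv c := Subtype.ext (Fin.ext rfl)
  right_inv i := rfl

lemma lemA (q x n : ℕ) (hq : 2 ≤ q) (hn : 1 ≤ n) :
    Nat.card {w : Fin n → Fin q // IsAdmissible q x n w ∧ (w ⟨n-1, by omega⟩ : ℕ) = q - 1}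
      + (q - 1) * Nadm q x (n-1) = Nadm q x n := by
  classical
  set Q : (Fin n → Fin q) → Prop := fun w => (w ⟨n-1, by omega⟩ : ℕ) = q - 1 with hQ
  have e1 : {w : Fin n → Fin q // IsAdmissible q x n w} ≃
      {u : {w : Fin n → Fin q // IsAdmissible q x n w} // Q u.1} ⊕
        {u : {w : Fin n → Fin q // IsAdmissible q x n w} // ¬ Q u.1} :=
    (Equiv.sumCompl _).symm
  have e2 : {u : {w : Fin n → Fin q // IsAdmissible q x n w} // Q u.1} ≃
      {w : Fin n → Fin q // IsAdmissible q x n w ∧ Q w} :=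
    Equiv.subtypeSubtypeEquivSubtypeInter _ _
  have e3 : {u : {w : Fin n → Fin q // IsAdmissible q x n w} // ¬ Q u.1} ≃
      {w : Fin n → Fin q // IsAdmissible q x n w ∧ ¬ Q w} :=
    Equiv.subtypeSubtypeEquivSubtypeInter (fun w => IsAdmissible q x n w) (fun w => ¬ Q w)
  have h1 : Nadm q x n =
      Nat.card {w : Fin n → Fin q // IsAdmissible q x n w ∧ Q w} +
      Nat.card {w : Fin n → Fin q // IsAdmissible q x n w ∧ ¬ Q w} := by
    rw [Nadm, Nat.card_congr e1, Nat.card_sum, Nat.card_congr e2, Nat.card_congr e3]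
  have h2 : Nat.card {w : Fin n → Fin q // IsAdmissible q x n w ∧ ¬ Q w} =
      (q - 1) * Nadm q x (n-1) := by
    rw [Nat.card_congr (equivSplit q x n hn), Nat.card_prod,
      Nat.card_congr (equivFinq (by omega)), Nat.card_eq_fintype_card, Fintype.card_fin]
    rfl
  rw [h1, h2]

noncomputable def equivTop2 (q x m : ℕ) (hq : 2 ≤ q) (hm : 2 ≤ m) :
    {w : Fin m → Fin q // IsAdmissible q x m w ∧ (w ⟨m - 1, by omega⟩ : ℕ) = q - 1 ∧
        (w ⟨m - 2, by omega⟩ : ℕ) = q - 1} ≃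
      {v : Fin (m-1) → Fin q // IsAdmissible q x (m-1) v ∧
        (v ⟨m - 1 - 1, by omega⟩ : ℕ) = q - 1} where
  toFun w := ⟨tail' w.1, adm_tail w.2.1, by
    show (w.1 ⟨m - 1 - 1, by omega⟩ : ℕ) = q - 1
    rw [show (⟨m - 1 - 1, by omega⟩ : Fin m) = ⟨m - 2, by omega⟩ from
      Fin.ext (show m - 1 - 1 = m - 2 by omega)]
    exact w.2.2.2⟩
  invFun v := ⟨cons' ⟨q - 1, by omega⟩ v.1, adm_cons_top2 hq hm rfl v.2.1 v.2.2,
    by rw [cons'_apply_last _ _ (by omega) (by omega)],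
    by rw [cons'_apply_lt _ _ (by omega) (show m - 2 < m - 1 by omega),
        show (⟨m - 2, by omega⟩ : Fin (m-1)) = ⟨m - 1 - 1, by omega⟩ from
          Fin.ext (show m - 2 = m - 1 - 1 by omega)]
       exact v.2.2⟩
  left_inv w := by
    refine Subtype.ext ?_
    have h := cons'_eq_self (show 1 ≤ m by omega) w.1
    rwa [show w.1 ⟨m - 1, by omega⟩ = ⟨q - 1, by omega⟩ from Fin.ext w.2.2.1] at h
  right_inv v := Subtype.ext (tail'_cons' _ v.1)

end Aux

/-- counting admissible words whose two leftmost symbols both equal `q-1`. -/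
theorem stmt_3 (q x m : ℕ) (hq : 2 ≤ q) (hx : 1 ≤ x) (hm : 2 ≤ m) :
    (Nat.card {w : Fin m → Fin q //
        IsAdmissible q x m w ∧ (w ⟨m - 1, by omega⟩ : ℕ) = q - 1 ∧
          (w ⟨m - 2, by omega⟩ : ℕ) = q - 1} : ℤ) =
      Nadm q x (m - 1) - ((q : ℤ) - 1) * Nadm q x (m - 2) := by
  have hN : Nadm q x (m - 2) = Nadm q x (m - 1 - 1) := by
    rw [show m - 2 = m - 1 - 1 by omega]
  rw [Nat.card_congr (equivTop2 q x m hq hm), eq_sub_iff_add_eq,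
    show ((q : ℤ) - 1) = ((q - 1 : ℕ) : ℤ) by omega, hN]
  exact_mod_cast lemA q x (m - 1) hq (by omega)
end

section
/- For all integers q ≥ 2, x ≥ 1, and m ≥ x+2, the number of admissible words of length m whose leftmost symbol equals q−1 and whose next x+1 symbols (positions m−2 down to m−x−2) are each at most q−2 equals (q−1)^{x+1}·N_q(m−x−2,x). -/
/-!
Write a word of length `n + (x + 2)` as `Fin.append u v`, where `v` is its top block of `x + 2`
symbols. The side condition says exactly that `q - 1` occurs in `v` only as its last symbol.
Such a block cannot meet a forbidden pattern: the upper end of the pattern would have to be the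
last symbol of `v`, and the lower end, at most `x + 1` places further down, would still lie in `v`.
Hence the word is admissible iff `u` is, and the count factors as `N_q(n, x)` times the
`(q - 1) ^ (x + 1)` possible blocks.
-/

namespace Fin

variable {α : Type*} {n k : ℕ}

theorem append_mk_of_lt (u : Fin n → α) (v : Fin k → α) {i : ℕ} (h : i < n + k) (hi : i < n) :
    append u v ⟨i, h⟩ = u ⟨i, hi⟩ :=
  append_left u v ⟨i, hi⟩

theorem append_mk_of_le (u : Fin n → α) (v : Fin k → α) {i : ℕ} (h : i < n + k) (hi : n ≤ i) :
    append u v ⟨i, h⟩ = v ⟨i - n, by omega⟩ := by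
  rw [← append_right u v ⟨i - n, by omega⟩]
  congr 1
  ext
  simp only [val_natAdd]
  omega

end Fin

variable {q x : ℕ}

theorem IsAdmissible.of_append {n k : ℕ} {u : Fin n → Fin q} {v : Fin k → Fin q}
    (h : IsAdmissible q x (n + k) (Fin.append u v)) : IsAdmissible q x n u := by
  intro i r hr1 hr2 hi ⟨htop, hbot, hmid⟩
  refine h i r hr1 hr2 (by omega) ⟨?_, ?_, fun j hj1 hj2 => ?_⟩
  · rwa [Fin.append_mk_of_lt _ _ _ hi]
  · rwa [Fin.append_mk_of_lt _ _ _ (by omega)]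
  · rw [Fin.append_mk_of_lt _ _ _ (by omega)]
    exact hmid j hj1 hj2

theorem isAdmissible_append_iff {n : ℕ} (u : Fin n → Fin q) (v : Fin (x + 2) → Fin q)
    (hv : ∀ j : Fin (x + 1), (v j.castSucc : ℕ) ≠ q - 1) :
    IsAdmissible q x (n + (x + 2)) (Fin.append u v) ↔ IsAdmissible q x n u := by
  refine ⟨IsAdmissible.of_append, fun hu i r hr1 hr2 hi ⟨htop, hbot, hmid⟩ => ?_⟩
  by_cases hlow : i + r + 1 < n
  · refine hu i r hr1 hr2 hlow ⟨?_, ?_, fun j hj1 hj2 => ?_⟩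
    · rwa [Fin.append_mk_of_lt _ _ _ hlow] at htop
    · rwa [Fin.append_mk_of_lt _ _ _ (by omega)] at hbot
    · have := hmid j hj1 hj2
      rwa [Fin.append_mk_of_lt _ _ _ (by omega)] at this
  rw [Fin.append_mk_of_le _ _ _ (by omega)] at htop
  have hend : i + r + 1 = n + (x + 1) := by
    by_contra hne
    exact hv ⟨i + r + 1 - n, by omega⟩ htop
  rw [Fin.append_mk_of_le _ _ _ (by omega)] at hbot
  exact hv ⟨i - n, by omega⟩ hbot

def IsGuardBlock (q x : ℕ) (v : Fin (x + 2) → Fin q) : Prop :=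
  ∀ i, (v i : ℕ) = q - 1 ↔ i = Fin.last (x + 1)

theorem IsGuardBlock.castSucc_ne {v : Fin (x + 2) → Fin q} (hv : IsGuardBlock q x v)
    (j : Fin (x + 1)) :
    (v j.castSucc : ℕ) ≠ q - 1 :=
  fun h => Fin.castSucc_ne_last j ((hv _).1 h)

theorem card_isGuardBlock (hq : 1 ≤ q) :
    Nat.card {v : Fin (x + 2) → Fin q // IsGuardBlock q x v} = (q - 1) ^ (x + 1) := by
  have htop : Nat.card {a : Fin q // (a : ℕ) = q - 1} = 1 := by
    rw [Nat.card_eq_one_iff_unique]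
    exact ⟨⟨fun a b => Subtype.ext (Fin.ext (a.2.trans b.2.symm))⟩, ⟨⟨⟨q - 1, by omega⟩, rfl⟩⟩⟩
  have hrest : Nat.card {a : Fin q // ¬ (a : ℕ) = q - 1} = q - 1 := by
    rw [Nat.card_eq_fintype_card, Fintype.card_subtype_compl, Fintype.card_fin,
      ← Nat.card_eq_fintype_card, htop]
  refine (Nat.card_congr (Equiv.subtypePiEquivPi (p := fun (i : Fin (x + 2)) (a : Fin q) =>
    (a : ℕ) = q - 1 ↔ i = Fin.last (x + 1)))).trans ?_
  rw [Nat.card_pi, Fin.prod_univ_castSucc]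
  simp only [Fin.castSucc_ne_last, iff_false, iff_true, hrest, htop, Finset.prod_const,
    Finset.card_univ, Fintype.card_fin, mul_one]

theorem isGuardBlock_iff_append (hq : 2 ≤ q) {n : ℕ} (u : Fin n → Fin q) (v : Fin (x + 2) → Fin q) :
    IsGuardBlock q x v ↔
      ((Fin.append u v ⟨n + (x + 2) - 1, by omega⟩ : Fin q) : ℕ) = q - 1 ∧
        ∀ (j : ℕ) (_ : 1 ≤ j) (_ : j ≤ x + 1),
          ((Fin.append u v ⟨n + (x + 2) - 1 - j, by omega⟩ : Fin q) : ℕ) ≤ q - 2 := by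
  rw [Fin.append_mk_of_le u v _ (by omega : n ≤ n + (x + 2) - 1)]
  constructor
  · intro hv
    refine ⟨(hv _).2 (Fin.ext (by simp only [Fin.val_last]; omega)), fun j hj1 hj2 => ?_⟩
    rw [Fin.append_mk_of_le _ _ _ (by omega)]
    have hne : (v ⟨n + (x + 2) - 1 - j - n, by omega⟩ : ℕ) ≠ q - 1 := fun h => by
      have := congrArg Fin.val ((hv _).1 h)
      simp only [Fin.val_last] at this
      omega
    have := (v ⟨n + (x + 2) - 1 - j - n, by omega⟩).isLt
    omega
  · rintro ⟨htop, hlow⟩ i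
    refine ⟨fun hi => ?_, ?_⟩
    · by_contra hne
      have hlt : (i : ℕ) < x + 1 := Fin.val_lt_last hne
      have hi' := hlow (x + 1 - i) (by omega) (by omega)
      rw [Fin.append_mk_of_le _ _ _ (by omega), show (⟨n + (x + 2) - 1 - (x + 1 - i) - n, _⟩ :
        Fin (x + 2)) = i from Fin.ext (by simp only; omega)] at hi'
      omega
    · rintro rfl
      rwa [show Fin.last (x + 1) = ⟨n + (x + 2) - 1 - n, by omega⟩ from
        Fin.ext (by simp only [Fin.val_last]; omega)]

/-- counting admissible words whose leftmost symbol is `q-1` and whose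
next `x+1` symbols (positions `m-2` down to `m-x-2`) are each at most `q-2`. -/
theorem stmt_4 (q x m : ℕ) (hq : 2 ≤ q) (hm : x + 2 ≤ m) :
    Nat.card {w : Fin m → Fin q //
        IsAdmissible q x m w ∧ (w ⟨m - 1, by omega⟩ : ℕ) = q - 1 ∧
          ∀ (j : ℕ) (_hj1 : 1 ≤ j) (_hj2 : j ≤ x + 1),
            (w ⟨m - 1 - j, by omega⟩ : ℕ) ≤ q - 2} =
      (q - 1) ^ (x + 1) * Nadm q x (m - x - 2) := by
  obtain ⟨n, rfl⟩ := Nat.exists_eq_add_of_le' hm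
  rw [show n + (x + 2) - x - 2 = n by omega, Nadm, ← card_isGuardBlock (x := x) (by omega),
    mul_comm, ← Nat.card_prod]
  refine (Nat.card_congr (Equiv.subtypeProdEquivProd.symm.trans
    ((Fin.appendEquiv n (x + 2)).subtypeEquiv fun ⟨u, v⟩ => ?_))).symm
  have hguard := isGuardBlock_iff_append hq u v
  exact ⟨fun ⟨hu, hv⟩ => ⟨(isAdmissible_append_iff u v hv.castSucc_ne).2 hu, hguard.1 hv⟩,
    fun ⟨hw, hv⟩ => ⟨hw.of_append, hguard.2 hv⟩⟩
end

section
/- Let q ≥ 2, x ≥ 1, and m ≥ 2 be integers, and let M : ℤ → ℚ be defined by M(j) = (q−1)^j for j ≤ 0, M(1) = q, and M(j) = q·M(j−1) − (q−1)·M(j−2) + (q−1)^{x+1}·M(j−x−2) for j ≥ 2. Let c = c_{m−1}...c_0 be an admissible word of length m, extended by c_i = 0 for i ≥ m, and write a_i for the integer value of c_i. For each 0 ≤ i ≤ m−1, set γ_i = x − k + 1 if there exists k ∈ {1, ..., x} with c_{i+k} = q−1 and c_{i+j} ≤ q−2 for all 1 ≤ j ≤ k−1, and γ_i = 0 otherwise.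 Then the lexicographic rank of c among admissible words of length m equals Σ_{i=0}^{m−1} a_i·(q−1)^{γ_i}·M(i − γ_i), as an identity in ℚ. -/
namespace Stmt7Aux

/-- the topmost `q-1` (if any) is below the top `γ` positions. -/
def SlowP (q γ n : ℕ) (u : Fin n → Fin q) : Prop :=
  ∀ (p : ℕ) (hp : p < n), (u ⟨p, hp⟩ : ℕ) = q - 1 →
    (∀ (p' : ℕ) (hp' : p' < n), p < p' → (u ⟨p', hp'⟩ : ℕ) ≤ q - 2) → p + γ < n

/-- prepending a `q-1` on top keeps the word admissible. -/
def HcP (q x n : ℕ) (u : Fin n → Fin q) : Prop :=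
  ∀ (p : ℕ) (hp : p < n), (u ⟨p, hp⟩ : ℕ) = q - 1 →
    (∀ (p' : ℕ) (hp' : p' < n), p < p' → (u ⟨p', hp'⟩ : ℕ) ≤ q - 2) →
    (p + 1 = n ∨ p + x + 1 < n)

noncomputable def Scard (q x γ n : ℕ) : ℕ :=
  Nat.card {u : Fin n → Fin q // IsAdmissible q x n u ∧ SlowP q γ n u}

noncomputable def Hcard (q x n : ℕ) : ℕ :=
  Nat.card {u : Fin n → Fin q // IsAdmissible q x n u ∧ HcP q x n u}

lemma slowP_zero {q n : ℕ} (u : Fin n → Fin q) : SlowP q 0 n u :=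
  fun p hp _ _ => by omega

lemma snoc_lt {q n : ℕ} (v : Fin n → Fin q) (b : Fin q) {p : ℕ} (hp : p < n) (hp' : p < n + 1) :
    (Fin.snoc v b : Fin (n+1) → Fin q) ⟨p, hp'⟩ = v ⟨p, hp⟩ := by
  have h : (⟨p, hp'⟩ : Fin (n+1)) = Fin.castSucc ⟨p, hp⟩ := by ext; simp
  rw [h, Fin.snoc_castSucc]

lemma snoc_top {q n : ℕ} (v : Fin n → Fin q) (b : Fin q) {p : ℕ} (hp : p = n) (hp' : p < n + 1) :
    (Fin.snoc v b : Fin (n+1) → Fin q) ⟨p, hp'⟩ = b := by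
  subst hp
  have h : (⟨p, hp'⟩ : Fin (p+1)) = Fin.last p := by ext; simp
  rw [h, Fin.snoc_last]

section IffLemmas

variable {q x n : ℕ} (v : Fin n → Fin q) (b : Fin q)

lemma adm_snoc_of_ne (hb : (b : ℕ) ≠ q - 1) :
    IsAdmissible q x (n+1) (Fin.snoc v b) ↔ IsAdmissible q x n v := by
  constructor
  · intro H i r h1 h2 h hcon
    obtain ⟨e1, e2, e3⟩ := hcon
    refine H i r h1 h2 (by omega) ⟨?_, ?_, ?_⟩
    · rw [snoc_lt v b h]; exact e1
    · rw [snoc_lt v b (by omega : i < n)]; exact e2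
    · intro j hj1 hj2
      rw [snoc_lt v b (by omega : i + j < n)]; exact e3 j hj1 hj2
  · intro H i r h1 h2 h hcon
    obtain ⟨e1, e2, e3⟩ := hcon
    by_cases hn : i + r + 1 < n
    · refine H i r h1 h2 hn ⟨?_, ?_, ?_⟩
      · rw [snoc_lt v b hn] at e1; exact e1
      · rw [snoc_lt v b (by omega : i < n)] at e2; exact e2
      · intro j hj1 hj2
        have := e3 j hj1 hj2
        rwa [snoc_lt v b (by omega : i + j < n)] at this
    · have hn' : i + r + 1 = n := by omega
      rw [snoc_top v b hn'] at e1
      exact hb e1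

lemma adm_snoc_qm1 (hq : 2 ≤ q) (hb : (b : ℕ) = q - 1) :
    IsAdmissible q x (n+1) (Fin.snoc v b) ↔ IsAdmissible q x n v ∧ HcP q x n v := by
  constructor
  · intro H
    constructor
    · intro i r h1 h2 h hcon
      obtain ⟨e1, e2, e3⟩ := hcon
      refine H i r h1 h2 (by omega) ⟨?_, ?_, ?_⟩
      · rw [snoc_lt v b h]; exact e1
      · rw [snoc_lt v b (by omega : i < n)]; exact e2
      · intro j hj1 hj2
        rw [snoc_lt v b (by omega : i + j < n)]; exact e3 j hj1 hj2
    · intro p hp e ab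
      by_contra hcon
      push_neg at hcon
      obtain ⟨hc1, hc2⟩ := hcon
      refine H p (n - p - 1) (by omega) (by omega) (by omega) ⟨?_, ?_, ?_⟩
      · rw [snoc_top v b (by omega : p + (n - p - 1) + 1 = n)]; exact hb
      · rw [snoc_lt v b (by omega : p < n)]; exact e
      · intro j hj1 hj2
        rw [snoc_lt v b (by omega : p + j < n)]
        exact ab (p + j) (by omega) (by omega)
  · rintro ⟨Hv, Hh⟩ i r h1 h2 h ⟨e1, e2, e3⟩
    by_cases hn : i + r + 1 < n
    · refine Hv i r h1 h2 hn ⟨?_, ?_, ?_⟩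
      · rw [snoc_lt v b hn] at e1; exact e1
      · rw [snoc_lt v b (by omega : i < n)] at e2; exact e2
      · intro j hj1 hj2
        have := e3 j hj1 hj2
        rwa [snoc_lt v b (by omega : i + j < n)] at this
    · have hn' : i + r + 1 = n := by omega
      rw [snoc_lt v b (by omega : i < n)] at e2
      have hab : ∀ (p' : ℕ) (hp' : p' < n), i < p' → (v ⟨p', hp'⟩ : ℕ) ≤ q - 2 := by
        intro p' hp' hlt
        have := e3 (p' - i) (by omega) (by omega)
        rw [snoc_lt v b (by omega : i + (p' - i) < n)] at this
        have hpe : (⟨i + (p' - i), by omega⟩ : Fin n) = ⟨p', hp'⟩ := by ext; simp; omega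
        rwa [hpe] at this
      have := Hh i (by omega) e2 hab
      omega

lemma slow_snoc (hq : 2 ≤ q) (γ : ℕ) :
    SlowP q (γ+1) (n+1) (Fin.snoc v b) ↔ (b : ℕ) ≤ q - 2 ∧ SlowP q γ n v := by
  constructor
  · intro H
    have hb2 : (b : ℕ) ≤ q - 2 := by
      by_contra hb
      have hbq : (b : ℕ) = q - 1 := by have := b.isLt; omega
      have := H n (by omega) (by rw [snoc_top v b rfl]; exact hbq)
        (fun p' hp' hlt => absurd hlt (by omega))
      omega
    refine ⟨hb2, ?_⟩
    intro p hp e ab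
    have := H p (by omega) (by rw [snoc_lt v b hp]; exact e) ?_
    · omega
    · intro p' hp' hlt
      by_cases h' : p' < n
      · rw [snoc_lt v b h']; exact ab p' h' hlt
      · rw [snoc_top v b (by omega)]; exact hb2
  · rintro ⟨hb, Hv⟩ p hp e ab
    by_cases h' : p < n
    · rw [snoc_lt v b h'] at e
      have := Hv p h' e ?_
      · omega
      · intro p' hp' hlt
        have := ab p' (by omega) hlt
        rwa [snoc_lt v b hp'] at this
    · have hpn : p = n := by omega
      rw [snoc_top v b hpn] at e
      omega

lemma hcP_snoc_qm1 (hq : 2 ≤ q) (hb : (b : ℕ) = q - 1) :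
    HcP q x (n+1) (Fin.snoc v b) := by
  intro p hp e ab
  by_cases h' : p < n
  · have := ab n (by omega) (by omega)
    rw [snoc_top v b rfl] at this
    omega
  · left; omega

lemma hcP_snoc_lt (hq : 2 ≤ q) (hb : (b : ℕ) ≤ q - 2) :
    HcP q x (n+1) (Fin.snoc v b) ↔ SlowP q x n v := by
  constructor
  · intro H p hp e ab
    have := H p (by omega) (by rw [snoc_lt v b hp]; exact e) ?_
    · omega
    · intro p' hp' hlt
      by_cases h' : p' < n
      · rw [snoc_lt v b h']; exact ab p' h' hlt
      · rw [snoc_top v b (by omega)]; exact hb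
  · intro Hv p hp e ab
    by_cases h' : p < n
    · rw [snoc_lt v b h'] at e
      have := Hv p h' e ?_
      · omega
      · intro p' hp' hlt
        have := ab p' (by omega) hlt
        rwa [snoc_lt v b hp'] at this
    · have hpn : p = n := by omega
      rw [snoc_top v b hpn] at e
      omega

end IffLemmas

end Stmt7Aux

namespace Stmt7Aux

noncomputable def snocSigma {q n : ℕ} (P : (Fin (n+1) → Fin q) → Prop) :
    {u : Fin (n+1) → Fin q // P u} ≃ Σ b : Fin q, {v : Fin n → Fin q // P (Fin.snoc v b)} where
  toFun u := ⟨u.1 (Fin.last n), Fin.init u.1, by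
    rw [show (Fin.snoc (Fin.init u.1) (u.1 (Fin.last n)) : Fin (n+1) → Fin q) = u.1 from
      Fin.snoc_init_self u.1]; exact u.2⟩
  invFun p := ⟨Fin.snoc p.2.1 p.1, p.2.2⟩
  left_inv u := Subtype.ext (Fin.snoc_init_self u.1)
  right_inv p := by
    obtain ⟨b, v, h⟩ := p
    refine Sigma.subtype_ext ?_ ?_
    · show (Fin.snoc v b : Fin (n+1) → Fin q) (Fin.last n) = b
      exact Fin.snoc_last (α := fun _ => Fin q) b v
    · show Fin.init (Fin.snoc v b : Fin (n+1) → Fin q) = v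
      exact Fin.init_snoc (α := fun _ => Fin q) b v

lemma card_snoc_split {q n : ℕ} (P : (Fin (n+1) → Fin q) → Prop) :
    Nat.card {u : Fin (n+1) → Fin q // P u}
      = ∑ b : Fin q, Nat.card {v : Fin n → Fin q // P (Fin.snoc v b)} := by
  classical
  rw [Nat.card_congr (snocSigma P)]
  letI : ∀ b : Fin q, Fintype {v : Fin n → Fin q // P (Fin.snoc v b)} :=
    fun b => Fintype.ofFinite _
  simp [Nat.card_eq_fintype_card, Fintype.card_sigma]

lemma card_len_zero {q : ℕ} (P : (Fin 0 → Fin q) → Prop) (hP : ∀ u, P u) :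
    Nat.card {u : Fin 0 → Fin q // P u} = 1 := by
  haveI : Nonempty {u : Fin 0 → Fin q // P u} := ⟨⟨fun i => i.elim0, hP _⟩⟩
  haveI : Subsingleton {u : Fin 0 → Fin q // P u} :=
    ⟨fun a b => Subtype.ext (funext fun i => i.elim0)⟩
  exact Nat.card_unique

lemma Scard_zero (q x γ : ℕ) : Scard q x γ 0 = 1 :=
  card_len_zero _ (fun u => ⟨fun i r _ _ h => by omega, fun p hp => by omega⟩)

lemma Hcard_zero (q x : ℕ) : Hcard q x 0 = 1 :=
  card_len_zero _ (fun u => ⟨fun i r _ _ h => by omega, fun p hp => by omega⟩)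

/-- evaluate a sum over `Fin q` that takes one value at val `q-1` and another elsewhere -/
lemma sum_fin_split {q : ℕ} (hq : 2 ≤ q) (f : Fin q → ℕ) (A B : ℕ)
    (hA : ∀ b : Fin q, (b : ℕ) ≠ q - 1 → f b = A)
    (hB : ∀ b : Fin q, (b : ℕ) = q - 1 → f b = B) :
    ∑ b : Fin q, f b = (q - 1) * A + B := by
  classical
  set qm1 : Fin q := ⟨q - 1, by omega⟩ with hqm1
  rw [← Finset.add_sum_erase Finset.univ f (Finset.mem_univ qm1)]
  have h1 : f qm1 = B := hB qm1 rfl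
  have h2 : ∀ b ∈ Finset.univ.erase qm1, f b = A := by
    intro b hb
    apply hA
    intro hval
    exact (Finset.mem_erase.mp hb).1 (Fin.ext hval)
  rw [h1, Finset.sum_congr rfl h2, Finset.sum_const,
    Finset.card_erase_of_mem (Finset.mem_univ qm1)]
  simp [Finset.card_univ, mul_comm]
  omega

lemma card_false {α : Type*} (P : α → Prop) (hP : ∀ a, ¬ P a) :
    Nat.card {a : α // P a} = 0 := by
  haveI : IsEmpty {a : α // P a} := ⟨fun u => hP u.1 u.2⟩
  exact Nat.card_of_isEmpty

lemma R1 {q x : ℕ} (hq : 2 ≤ q) (γ n : ℕ) :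
    Scard q x (γ+1) (n+1) = (q - 1) * Scard q x γ n := by
  rw [Scard, card_snoc_split]
  rw [sum_fin_split hq _ (Scard q x γ n) 0]
  · omega
  · intro b hb
    apply Nat.card_congr
    apply Equiv.subtypeEquivRight
    intro v
    rw [adm_snoc_of_ne v b hb, slow_snoc v b hq γ]
    have hb2 : (b : ℕ) ≤ q - 2 := by have := b.isLt; omega
    tauto
  · intro b hb
    apply card_false
    rintro v ⟨hadm, hslow⟩
    rw [slow_snoc v b hq γ] at hslow
    omega

lemma R2 {q x : ℕ} (hq : 2 ≤ q) (n : ℕ) :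
    Scard q x 0 (n+1) = (q - 1) * Scard q x 0 n + Hcard q x n := by
  rw [Scard, card_snoc_split]
  rw [sum_fin_split hq _ (Scard q x 0 n) (Hcard q x n)]
  · intro b hb
    apply Nat.card_congr
    apply Equiv.subtypeEquivRight
    intro v
    rw [adm_snoc_of_ne v b hb]
    exact ⟨fun h => ⟨h.1, slowP_zero v⟩, fun h => ⟨h.1, slowP_zero _⟩⟩
  · intro b hb
    apply Nat.card_congr
    apply Equiv.subtypeEquivRight
    intro v
    rw [adm_snoc_qm1 v b hq hb]
    exact ⟨fun h => h.1, fun h => ⟨h, slowP_zero _⟩⟩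

lemma R3 {q x : ℕ} (hq : 2 ≤ q) (n : ℕ) :
    Hcard q x (n+1) = (q - 1) * Scard q x x n + Hcard q x n := by
  rw [Hcard, card_snoc_split]
  rw [sum_fin_split hq _ (Scard q x x n) (Hcard q x n)]
  · intro b hb
    apply Nat.card_congr
    apply Equiv.subtypeEquivRight
    intro v
    have hb2 : (b : ℕ) ≤ q - 2 := by have := b.isLt; omega
    rw [adm_snoc_of_ne v b hb, hcP_snoc_lt v b hq hb2]
  · intro b hb
    apply Nat.card_congr
    apply Equiv.subtypeEquivRight
    intro v
    rw [adm_snoc_qm1 v b hq hb]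
    exact ⟨fun h => h.1, fun h => ⟨h, hcP_snoc_qm1 v b hq hb⟩⟩

end Stmt7Aux

namespace Stmt7Aux

section Analysis

variable {q x : ℕ} (M : ℤ → ℚ)

lemma qm1_ne (hq : 2 ≤ q) : ((q : ℚ) - 1) ≠ 0 := by
  have : (2 : ℚ) ≤ (q : ℚ) := by exact_mod_cast hq
  intro h
  nlinarith

lemma slowM (hq : 2 ≤ q)
    (hMneg : ∀ j : ℤ, j ≤ 0 → M j = ((q : ℚ) - 1) ^ j) :
    ∀ (γ n : ℕ), (∀ k : ℕ, k ≤ n → (Scard q x 0 k : ℚ) = M k) →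
      (Scard q x γ n : ℚ) = ((q : ℚ) - 1) ^ γ * M ((n : ℤ) - (γ : ℤ)) := by
  intro γ
  induction γ with
  | zero =>
    intro n h
    rw [pow_zero, one_mul, show (n : ℤ) - ((0:ℕ) : ℤ) = (n : ℤ) by push_cast; ring]
    exact h n le_rfl
  | succ γ ihγ =>
    intro n h
    match n with
    | 0 =>
      rw [Scard_zero, show ((0:ℕ) : ℤ) - ((γ+1:ℕ) : ℤ) = -(((γ:ℕ) : ℤ)+1) by push_cast; ring]
      rw [hMneg _ (by omega)]
      rw [zpow_neg, show (((γ:ℕ):ℤ)+1) = ((γ+1 : ℕ) : ℤ) by push_cast; ring, zpow_natCast]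
      rw [Nat.cast_one, mul_inv_cancel₀ (pow_ne_zero _ (qm1_ne hq))]
    | Nat.succ n =>
      rw [R1 hq γ n]
      push_cast [Nat.cast_sub (by omega : 1 ≤ q)]
      rw [ihγ n (fun k hk => h k (by omega))]
      rw [show ((n:ℤ) + 1) - ((γ:ℤ) + 1) = (n : ℤ) - (γ : ℤ) by ring]
      ring

lemma keyM (hq : 2 ≤ q) (hx : 1 ≤ x)
    (hMneg : ∀ j : ℤ, j ≤ 0 → M j = ((q : ℚ) - 1) ^ j)
    (hM1 : M 1 = q)
    (hMrec : ∀ j : ℤ, 2 ≤ j →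
      M j = q * M (j - 1) - ((q : ℚ) - 1) * M (j - 2)
            + ((q : ℚ) - 1) ^ (x + 1) * M (j - (x : ℤ) - 2)) :
    ∀ n : ℕ, (Scard q x 0 n : ℚ) = M (n : ℤ) ∧
      (Hcard q x n : ℚ) = M ((n : ℤ) + 1) - ((q : ℚ) - 1) * M (n : ℤ) := by
  intro n
  induction n using Nat.strong_induction_on with
  | _ n ih =>
    match n with
    | 0 =>
      have h0 : M ((0:ℕ) : ℤ) = 1 := by
        rw [show ((0:ℕ) : ℤ) = 0 by simp, hMneg 0 le_rfl, zpow_zero]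
      constructor
      · rw [Scard_zero, h0, Nat.cast_one]
      · rw [Hcard_zero, show ((0:ℕ):ℤ) + 1 = 1 by simp, hM1, h0, Nat.cast_one]
        ring
    | Nat.succ n =>
      have ihn := ih n (by omega)
      have hk : ∀ k : ℕ, k ≤ n → (Scard q x 0 k : ℚ) = M (k : ℤ) :=
        fun k hkn => (ih k (by omega)).1
      constructor
      · rw [R2 hq n]
        push_cast [Nat.cast_sub (by omega : 1 ≤ q)]
        rw [ihn.1, ihn.2]
        ring
      · rw [R3 hq n]
        push_cast [Nat.cast_sub (by omega : 1 ≤ q)]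
        rw [ihn.2, slowM M hq hMneg x n hk]
        have hrec := hMrec ((n : ℤ) + 2) (by omega)
        rw [show (n:ℤ) + 2 - 1 = (n:ℤ) + 1 by ring, show (n:ℤ) + 2 - 2 = (n:ℤ) by ring,
          show (n:ℤ) + 2 - (x:ℤ) - 2 = (n:ℤ) - (x:ℤ) by ring] at hrec
        rw [show (n:ℤ) + 1 + 1 = (n:ℤ) + 2 by ring, hrec]
        ring

lemma Scard_eq (hq : 2 ≤ q) (hx : 1 ≤ x)
    (hMneg : ∀ j : ℤ, j ≤ 0 → M j = ((q : ℚ) - 1) ^ j)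
    (hM1 : M 1 = q)
    (hMrec : ∀ j : ℤ, 2 ≤ j →
      M j = q * M (j - 1) - ((q : ℚ) - 1) * M (j - 2)
            + ((q : ℚ) - 1) ^ (x + 1) * M (j - (x : ℤ) - 2))
    (γ n : ℕ) :
    (Scard q x γ n : ℚ) = ((q : ℚ) - 1) ^ γ * M ((n : ℤ) - (γ : ℤ)) :=
  slowM M hq hMneg γ n (fun k _ => (keyM M hq hx hMneg hM1 hMrec k).1)

end Analysis

end Stmt7Aux

namespace Stmt7Aux

lemma fval {α : Type*} {m : ℕ} (f : Fin m → α) {p p' : ℕ} {h : p < m} (h' : p' < m)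
    (e : p = p') : f ⟨p, h⟩ = f ⟨p', h'⟩ := by subst e; rfl

def glue (q m : ℕ) (c : Fin m → Fin q) (i : ℕ) (b : Fin q) (u : Fin i → Fin q) :
    Fin m → Fin q :=
  fun j => if h : (j : ℕ) < i then u ⟨j, h⟩ else if (j : ℕ) = i then b else c j

variable {q x m : ℕ}

lemma glue_lt (c : Fin m → Fin q) {i : ℕ} (b : Fin q) (u : Fin i → Fin q)
    {p : ℕ} (h : p < i) (hp : p < m) : glue q m c i b u ⟨p, hp⟩ = u ⟨p, h⟩ := by
  simp [glue, h]

lemma glue_at (c : Fin m → Fin q) {i : ℕ} (b : Fin q) (u : Fin i → Fin q)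
    (hp : i < m) : glue q m c i b u ⟨i, hp⟩ = b := by
  simp [glue]

lemma glue_gt (c : Fin m → Fin q) {i : ℕ} (b : Fin q) (u : Fin i → Fin q)
    {p : ℕ} (h : i < p) (hp : p < m) : glue q m c i b u ⟨p, hp⟩ = c ⟨p, hp⟩ := by
  have h1 : ¬ ((p : ℕ) < i) := by omega
  have h2 : ¬ ((p : ℕ) = i) := by omega
  simp [glue, h1, h2]

lemma glue_gt' (c : Fin m → Fin q) {i : ℕ} (b : Fin q) (u : Fin i → Fin q)
    (j : Fin m) (h : i < (j : ℕ)) : glue q m c i b u j = c j := by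
  have e1 : glue q m c i b u j = glue q m c i b u ⟨(j : ℕ), j.2⟩ :=
    congrArg _ (Fin.ext rfl)
  rw [e1, glue_gt c b u h j.2]

lemma glue_eta (c : Fin m → Fin q) {i : ℕ} (hi : i < m) (v : Fin m → Fin q)
    (hab : ∀ j : Fin m, (⟨i, hi⟩ : Fin m) < j → v j = c j) :
    v = glue q m c i (v ⟨i, hi⟩) (fun p => v ⟨(p : ℕ), lt_trans p.2 hi⟩) := by
  funext j
  unfold glue
  by_cases h1 : (j : ℕ) < i
  · rw [dif_pos h1]
  · rw [dif_neg h1]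
    by_cases h2 : (j : ℕ) = i
    · rw [if_pos h2]
      exact congrArg v (Fin.ext h2)
    · rw [if_neg h2]
      exact hab j (by rw [Fin.lt_def]; simp; omega)

lemma main_iff (hq : 2 ≤ q) (hx : 1 ≤ x)
    (c : Fin m → Fin q) (hc : IsAdmissible q x m c)
    (a : ℕ → ℕ)
    (ha : ∀ i : ℕ, a i = if h : i < m then (c ⟨i, h⟩ : ℕ) else 0)
    (γ : ℕ → ℕ)
    (hγ1 : ∀ i k : ℕ, 1 ≤ k → k ≤ x → a (i + k) = q - 1 →
      (∀ (j : ℕ) (_hj1 : 1 ≤ j) (_hj2 : j ≤ k - 1), a (i + j) ≤ q - 2) →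
      γ i = x - k + 1)
    (hγ2 : ∀ i : ℕ,
      (¬∃ k : ℕ, 1 ≤ k ∧ k ≤ x ∧ a (i + k) = q - 1 ∧
        ∀ (j : ℕ) (_hj1 : 1 ≤ j) (_hj2 : j ≤ k - 1), a (i + j) ≤ q - 2) →
      γ i = 0)
    (i : ℕ) (hi : i < m) (b : Fin q) (hb : b < c ⟨i, hi⟩) (u : Fin i → Fin q) :
    IsAdmissible q x m (glue q m c i b u) ↔
      IsAdmissible q x i u ∧ SlowP q (γ i) i u := by
  have hbv : (b : ℕ) ≤ q - 2 := by
    have h1 : (b : ℕ) < (c ⟨i, hi⟩ : ℕ) := hb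
    have h2 := (c ⟨i, hi⟩).isLt
    omega
  constructor
  · intro H
    constructor
    · -- admissibility of u
      intro i0 r h1 h2 h hcon
      obtain ⟨e1, e2, e3⟩ := hcon
      refine H i0 r h1 h2 (by omega) ⟨?_, ?_, ?_⟩
      · rw [glue_lt c b u h (by omega)]; exact e1
      · rw [glue_lt c b u (by omega : i0 < i) (by omega)]; exact e2
      · intro j hj1 hj2
        rw [glue_lt c b u (by omega : i0 + j < i) (by omega)]
        exact e3 j hj1 hj2
    · -- slowness of u
      intro p hp e ab
      by_cases hex : ∃ k : ℕ, 1 ≤ k ∧ k ≤ x ∧ a (i + k) = q - 1 ∧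
          ∀ (j : ℕ) (_hj1 : 1 ≤ j) (_hj2 : j ≤ k - 1), a (i + j) ≤ q - 2
      · obtain ⟨k, hk1, hk2, hk3, hk4⟩ := hex
        have hγ : γ i = x - k + 1 := hγ1 i k hk1 hk2 hk3 hk4
        by_contra hcon
        have hikm : i + k < m := by
          by_contra h'
          rw [ha (i + k), dif_neg (by omega)] at hk3
          omega
        have hck : (c ⟨i + k, hikm⟩ : ℕ) = q - 1 := by
          rw [ha (i + k), dif_pos hikm] at hk3
          exact hk3
        refine H p (i + k - p - 1) (by omega) (by omega) (by omega) ⟨?_, ?_, ?_⟩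
        · rw [fval (glue q m c i b u) hikm (by omega), glue_gt c b u (by omega) hikm]
          exact hck
        · rw [glue_lt c b u hp (by omega)]; exact e
        · intro j hj1 hj2
          by_cases hj : p + j < i
          · rw [glue_lt c b u hj (by omega)]
            exact ab (p + j) hj (by omega)
          · by_cases hj' : p + j = i
            · rw [fval (glue q m c i b u) hi hj', glue_at c b u hi]
              exact hbv
            · have hgt : i < p + j := by omega
              have hm' : p + j < m := by omega
              rw [glue_gt c b u hgt hm']
              have := hk4 (p + j - i) (by omega) (by omega)
              rw [ha (i + (p + j - i)), dif_pos (by omega : i + (p + j - i) < m)] at this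
              rw [fval c hm' (by omega : i + (p + j - i) = p + j)] at this
              exact this
      · rw [hγ2 i hex]
        omega
  · rintro ⟨Hu, Hs⟩ i0 r h1 h2 h ⟨e1, e2, e3⟩
    by_cases ht : i0 + r + 1 < i
    · refine Hu i0 r h1 h2 ht ⟨?_, ?_, ?_⟩
      · rw [glue_lt c b u ht (by omega)] at e1; exact e1
      · rw [glue_lt c b u (by omega : i0 < i) (by omega)] at e2; exact e2
      · intro j hj1 hj2
        have := e3 j hj1 hj2
        rwa [glue_lt c b u (by omega : i0 + j < i) (by omega)] at this
    · by_cases hti : i0 + r + 1 = i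
      · rw [fval (glue q m c i b u) hi hti, glue_at c b u hi] at e1
        omega
      · -- i < i0 + r + 1
        by_cases hi0 : i < i0
        · refine hc i0 r h1 h2 h ⟨?_, ?_, ?_⟩
          · rw [glue_gt c b u (by omega : i < i0 + r + 1) h] at e1; exact e1
          · rw [glue_gt c b u hi0 (by omega)] at e2; exact e2
          · intro j hj1 hj2
            have := e3 j hj1 hj2
            rwa [glue_gt c b u (by omega : i < i0 + j) (by omega)] at this
        · by_cases hi0e : i0 = i
          · rw [fval (glue q m c i b u) hi hi0e, glue_at c b u hi] at e2
            omega
          · -- cross pattern : i0 < i < i0 + r + 1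
            have hi0lt : i0 < i := by omega
            set k := i0 + r + 1 - i with hkdef
            have hk1 : 1 ≤ k := by omega
            have hk2 : k ≤ x := by omega
            have hk3 : a (i + k) = q - 1 := by
              rw [ha (i + k), dif_pos (by omega : i + k < m)]
              rw [glue_gt c b u (by omega : i < i0 + r + 1) h] at e1
              rw [fval c h (by omega : i + k = i0 + r + 1)]
              exact e1
            have hk4 : ∀ (j : ℕ) (_hj1 : 1 ≤ j) (_hj2 : j ≤ k - 1), a (i + j) ≤ q - 2 := by
              intro j hj1 hj2
              have := e3 (i + j - i0) (by omega) (by omega)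
              rw [fval (glue q m c i b u) (by omega : i + j < m)
                (by omega : i0 + (i + j - i0) = i + j)] at this
              rw [glue_gt c b u (by omega : i < i + j) (by omega)] at this
              rw [ha (i + j), dif_pos (by omega : i + j < m)]
              exact this
            have hγ : γ i = x - k + 1 := hγ1 i k hk1 hk2 hk3 hk4
            have e2' : (u ⟨i0, by omega⟩ : ℕ) = q - 1 := by
              rw [glue_lt c b u hi0lt (by omega)] at e2; exact e2
            have hab : ∀ (p' : ℕ) (hp' : p' < i), i0 < p' → (u ⟨p', hp'⟩ : ℕ) ≤ q - 2 := by
              intro p' hp' hlt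
              have := e3 (p' - i0) (by omega) (by omega)
              rw [fval (glue q m c i b u) (by omega : p' < m)
                (by omega : i0 + (p' - i0) = p')] at this
              rwa [glue_lt c b u hp' (by omega)] at this
            have := Hs i0 (by omega) e2' hab
            omega

lemma natCard_sigma {ι : Type*} [Fintype ι] (T : ι → Type*) [∀ i, Finite (T i)] :
    Nat.card (Σ i, T i) = ∑ i, Nat.card (T i) := by
  letI : ∀ i, Fintype (T i) := fun i => Fintype.ofFinite _
  simp [Nat.card_eq_fintype_card, Fintype.card_sigma]

lemma card_lt_fin (t : Fin q) : Nat.card {b : Fin q // b < t} = (t : ℕ) := by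
  have e : {b : Fin q // b < t} ≃ Fin (t : ℕ) :=
    { toFun := fun b => ⟨(b.1 : ℕ), b.2⟩
      invFun := fun j => ⟨⟨(j : ℕ), lt_trans j.2 t.isLt⟩, j.2⟩
      left_inv := fun b => Subtype.ext (Fin.ext rfl)
      right_inv := fun j => Fin.ext rfl }
  rw [Nat.card_congr e, Nat.card_eq_fintype_card, Fintype.card_fin]

end Stmt7Aux

namespace Stmt7Aux

def Tset (q x m : ℕ) (c : Fin m → Fin q) (i : Fin m) : Type :=
  {v : Fin m → Fin q // IsAdmissible q x m v ∧ v i < c i ∧ ∀ j, i < j → v j = c j}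

instance (q x m : ℕ) (c : Fin m → Fin q) (i : Fin m) : Finite (Tset q x m c i) := by
  unfold Tset; infer_instance

end Stmt7Aux

open Stmt7Aux in
/-- the encoding-decoding rule: the lexicographic rank of an admissible
codeword `c` equals `Σ_{i=0}^{m-1} a_i (q-1)^{γ_i} M(i - γ_i)`. -/
theorem stmt_7 (q x m : ℕ) (hq : 2 ≤ q) (hx : 1 ≤ x) (hm : 2 ≤ m)
    (M : ℤ → ℚ)
    (hMneg : ∀ j : ℤ, j ≤ 0 → M j = ((q : ℚ) - 1) ^ j)
    (hM1 : M 1 = q)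
    (hMrec : ∀ j : ℤ, 2 ≤ j →
      M j = q * M (j - 1) - ((q : ℚ) - 1) * M (j - 2)
            + ((q : ℚ) - 1) ^ (x + 1) * M (j - (x : ℤ) - 2))
    (c : Fin m → Fin q) (hc : IsAdmissible q x m c)
    (a : ℕ → ℕ)
    (ha : ∀ i : ℕ, a i = if h : i < m then (c ⟨i, h⟩ : ℕ) else 0)
    (γ : ℕ → ℕ)
    (hγ1 : ∀ i k : ℕ, 1 ≤ k → k ≤ x → a (i + k) = q - 1 →
      (∀ (j : ℕ) (_hj1 : 1 ≤ j) (_hj2 : j ≤ k - 1), a (i + j) ≤ q - 2) →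
      γ i = x - k + 1)
    (hγ2 : ∀ i : ℕ,
      (¬∃ k : ℕ, 1 ≤ k ∧ k ≤ x ∧ a (i + k) = q - 1 ∧
        ∀ (j : ℕ) (_hj1 : 1 ≤ j) (_hj2 : j ≤ k - 1), a (i + j) ≤ q - 2) →
      γ i = 0) :
    (rankOf q x m c : ℚ) =
      ∑ i ∈ Finset.range m, (a i : ℚ) * ((q : ℚ) - 1) ^ (γ i) * M ((i : ℤ) - (γ i : ℤ)) := by
  classical
  have huniq : ∀ (v : Fin m → Fin q) (i i' : Fin m),
      (v i < c i ∧ ∀ j, i < j → v j = c j) →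
      (v i' < c i' ∧ ∀ j, i' < j → v j = c j) → i = i' := by
    intro v i i' h h'
    rcases lt_trichotomy i i' with hlt | he | hgt
    · have hx2 := h'.1
      rw [h.2 i' hlt] at hx2
      exact absurd hx2 (lt_irrefl _)
    · exact he
    · have hx2 := h.1
      rw [h'.2 i hgt] at hx2
      exact absurd hx2 (lt_irrefl _)
  have E : {v : Fin m → Fin q // IsAdmissible q x m v ∧ LexLt v c} ≃
      Σ i : Fin m, Tset q x m c i :=
    { toFun := fun v => ⟨Classical.choose v.2.2, ⟨v.1, v.2.1, Classical.choose_spec v.2.2⟩⟩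
      invFun := fun p => ⟨p.2.1, p.2.2.1, ⟨p.1, p.2.2.2⟩⟩
      left_inv := fun v => Subtype.ext rfl
      right_inv := fun p => by
        obtain ⟨i, v, hv⟩ := p
        refine Sigma.subtype_ext ?_ rfl
        exact huniq v _ i (Classical.choose_spec (⟨i, hv.2⟩ : LexLt v c)) hv.2 }
  have step1 : rankOf q x m c = ∑ i : Fin m, Nat.card (Tset q x m c i) := by
    rw [rankOf, Nat.card_congr E, natCard_sigma]
  have step2 : ∀ (iv : ℕ) (hi : iv < m),
      Nat.card (Tset q x m c ⟨iv, hi⟩) = a iv * Scard q x (γ iv) iv := by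
    intro iv hi
    have pf : ∀ v : Tset q x m c ⟨iv, hi⟩,
        IsAdmissible q x iv (fun p : Fin iv => v.1 ⟨(p : ℕ), lt_trans p.2 hi⟩) ∧
          SlowP q (γ iv) iv (fun p : Fin iv => v.1 ⟨(p : ℕ), lt_trans p.2 hi⟩) := by
      intro v
      have hvg := glue_eta c hi v.1 v.2.2.2
      have hadm : IsAdmissible q x m
          (glue q m c iv (v.1 ⟨iv, hi⟩) (fun p : Fin iv => v.1 ⟨(p : ℕ), lt_trans p.2 hi⟩)) := by
        rw [← hvg]; exact v.2.1
      exact (main_iff hq hx c hc a ha γ hγ1 hγ2 iv hi (v.1 ⟨iv, hi⟩) v.2.2.1 _).mp hadm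
    have e2 : Tset q x m c ⟨iv, hi⟩ ≃ {b : Fin q // b < c ⟨iv, hi⟩} ×
        {u : Fin iv → Fin q // IsAdmissible q x iv u ∧ SlowP q (γ iv) iv u} :=
      { toFun := fun v =>
          ⟨⟨v.1 ⟨iv, hi⟩, v.2.2.1⟩, ⟨fun p => v.1 ⟨(p : ℕ), lt_trans p.2 hi⟩, pf v⟩⟩
        invFun := fun p =>
          ⟨glue q m c iv p.1.1 p.2.1,
            (main_iff hq hx c hc a ha γ hγ1 hγ2 iv hi p.1.1 p.1.2 p.2.1).mpr p.2.2,
            by rw [glue_at c p.1.1 p.2.1 hi]; exact p.1.2,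
            fun j hj => glue_gt' c p.1.1 p.2.1 j hj⟩
        left_inv := fun v => Subtype.ext (glue_eta c hi v.1 v.2.2.2).symm
        right_inv := fun p => by
          obtain ⟨⟨b, hbp⟩, ⟨u, hu⟩⟩ := p
          have h1 : glue q m c iv b u ⟨iv, hi⟩ = b := glue_at c b u hi
          have h2 : (fun p : Fin iv => glue q m c iv b u ⟨(p : ℕ), lt_trans p.2 hi⟩) = u := by
            funext p'
            rw [glue_lt c b u p'.2 (lt_trans p'.2 hi)]
          exact Prod.ext (Subtype.ext h1) (Subtype.ext h2) }
    rw [Nat.card_congr e2, Nat.card_prod, card_lt_fin]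
    congr 1
    rw [ha iv, dif_pos hi]
  rw [step1, Nat.cast_sum]
  have step3 : ∀ i : Fin m, ((Nat.card (Tset q x m c i) : ℚ)) =
      (fun n : ℕ => (a n : ℚ) * ((q : ℚ) - 1) ^ (γ n) * M ((n : ℤ) - (γ n : ℤ))) (i : ℕ) := by
    intro i
    obtain ⟨iv, hi⟩ := i
    rw [step2 iv hi]
    push_cast
    rw [Scard_eq M hq hx hMneg hM1 hMrec (γ iv) iv]
    ring
  rw [Finset.sum_congr rfl (fun i _ => step3 i)]
  exact Fin.sum_univ_eq_sum_range
    (fun n : ℕ => (a n : ℚ) * ((q : ℚ) - 1) ^ (γ n) * M ((n : ℤ) - (γ n : ℤ))) m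
end

section
/- Let q ≥ 2, x ≥ 1, and m ≥ 2 be integers. Let c be an admissible word of length m and let δ ∈ {0, ..., q−2}. Then the length-(m+1) word δ·c obtained by prepending δ on the left is admissible, and its lexicographic rank among admissible words of length m+1 equals δ·N_q(m,x) plus the lexicographic rank of c among admissible words of length m. -/
lemma snoc_val {q m : ℕ} (v : Fin m → Fin q) (a : Fin q) {k : ℕ} (hk : k < m)
    (hk' : k < m + 1) : (Fin.snoc v a : Fin (m+1) → Fin q) ⟨k, hk'⟩ = v ⟨k, hk⟩ := by
  have : (⟨k, hk'⟩ : Fin (m+1)) = Fin.castSucc ⟨k, hk⟩ := rfl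
  rw [this, Fin.snoc_castSucc]

lemma snoc_top {q m : ℕ} (v : Fin m → Fin q) (a : Fin q) (hk' : m < m + 1) :
    (Fin.snoc v a : Fin (m+1) → Fin q) ⟨m, hk'⟩ = a := by
  have : (⟨m, hk'⟩ : Fin (m+1)) = Fin.last m := rfl
  rw [this, Fin.snoc_last]

lemma adm_snoc_iff {q x m : ℕ} (hq : 2 ≤ q) (v : Fin m → Fin q) (a : Fin q)
    (ha : (a : ℕ) ≤ q - 2) :
    IsAdmissible q x (m + 1) (Fin.snoc v a) ↔ IsAdmissible q x m v := by
  constructor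
  · intro h i r hr1 hr2 hlt
    rintro ⟨h1, h2, h3⟩
    refine h i r hr1 hr2 (by omega) ⟨?_, ?_, ?_⟩
    · rw [snoc_val v a hlt]; exact h1
    · rw [snoc_val v a (by omega)]; exact h2
    · intro j hj1 hj2
      rw [snoc_val v a (by omega)]
      exact h3 j hj1 hj2
  · intro h i r hr1 hr2 hlt
    rintro ⟨h1, h2, h3⟩
    rcases Nat.lt_or_ge (i + r + 1) m with hm | hm
    · refine h i r hr1 hr2 hm ⟨?_, ?_, ?_⟩
      · rw [snoc_val v a hm] at h1; exact h1
      · rw [snoc_val v a (by omega)] at h2; exact h2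
      · intro j hj1 hj2
        have := h3 j hj1 hj2
        rw [snoc_val v a (by omega)] at this
        exact this
    · have he : i + r + 1 = m := by omega
      subst he
      rw [snoc_top] at h1
      omega

lemma lexLt_snoc_iff {q m : ℕ} (c v : Fin m → Fin q) (δ a : Fin q) :
    LexLt (Fin.snoc v a) (Fin.snoc c δ) ↔ a < δ ∨ (a = δ ∧ LexLt v c) := by
  constructor
  · rintro ⟨i, hlt, heq⟩
    rcases Fin.eq_castSucc_or_eq_last i with ⟨i', rfl⟩ | rfl
    · right
      refine ⟨?_, i', ?_, ?_⟩
      · have := heq (Fin.last m) (Fin.castSucc_lt_last i')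
        rwa [Fin.snoc_last, Fin.snoc_last] at this
      · rwa [Fin.snoc_castSucc, Fin.snoc_castSucc] at hlt
      · intro j hj
        have := heq (Fin.castSucc j) (Fin.castSucc_lt_castSucc_iff.mpr hj)
        rwa [Fin.snoc_castSucc, Fin.snoc_castSucc] at this
    · left
      rwa [Fin.snoc_last, Fin.snoc_last] at hlt
  · rintro (h | ⟨rfl, i', hlt, heq⟩)
    · refine ⟨Fin.last m, ?_, fun j hj => absurd hj (Fin.le_last j).not_gt⟩
      rwa [Fin.snoc_last, Fin.snoc_last]
    · refine ⟨Fin.castSucc i', ?_, fun j hj => ?_⟩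
      · rwa [Fin.snoc_castSucc, Fin.snoc_castSucc]
      · rcases Fin.eq_castSucc_or_eq_last j with ⟨j', rfl⟩ | rfl
        · rw [Fin.snoc_castSucc, Fin.snoc_castSucc]
          exact heq j' (Fin.castSucc_lt_castSucc_iff.mp hj)
        · rw [Fin.snoc_last, Fin.snoc_last]

/-- prepending a symbol `δ ≤ q-2` to an admissible word preserves
admissibility and shifts the rank by `δ · N_q(m,x)`. -/
theorem stmt_8 (q x m : ℕ) (hq : 2 ≤ q) (hx : 1 ≤ x) (hm : 2 ≤ m)
    (c : Fin m → Fin q) (hc : IsAdmissible q x m c)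
    (δ : Fin q) (hδ : (δ : ℕ) ≤ q - 2) :
    IsAdmissible q x (m + 1) (Fin.snoc c δ) ∧
    rankOf q x (m + 1) (Fin.snoc c δ) = (δ : ℕ) * Nadm q x m + rankOf q x m c := by
  classical
  refine ⟨(adm_snoc_iff hq c δ hδ).mpr hc, ?_⟩
  set A : Fin q × (Fin m → Fin q) → Prop :=
    fun p => p.1 < δ ∧ IsAdmissible q x m p.2 with hA
  set B : Fin q × (Fin m → Fin q) → Prop :=
    fun p => p.1 = δ ∧ (IsAdmissible q x m p.2 ∧ LexLt p.2 c) with hB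
  have e1 : {p : Fin q × (Fin m → Fin q) // A p ∨ B p} ≃
      {w : Fin (m+1) → Fin q // IsAdmissible q x (m+1) w ∧ LexLt w (Fin.snoc c δ)} := by
    refine Equiv.subtypeEquiv (Fin.snocEquiv fun _ => Fin q) fun p => ?_
    obtain ⟨a, v⟩ := p
    have hsnoc : (Fin.snocEquiv fun _ => Fin q) (a, v) = Fin.snoc v a := rfl
    rw [hsnoc]
    constructor
    · rintro (⟨hlt, hv⟩ | hcase)
      · have ha : (a : ℕ) ≤ q - 2 := by
          have h1 : (a : ℕ) < (δ : ℕ) := hlt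
          omega
        exact ⟨(adm_snoc_iff hq v a ha).mpr hv,
          (lexLt_snoc_iff c v δ a).mpr (Or.inl hlt)⟩
      · simp only [hB] at hcase
        obtain ⟨he, hv, hlex⟩ := hcase
        exact ⟨(adm_snoc_iff hq v a ((show a = δ from he) ▸ hδ)).mpr hv,
          (lexLt_snoc_iff c v δ a).mpr (Or.inr ⟨he, hlex⟩)⟩
    · rintro ⟨hadm', hlex'⟩
      have hcond := (lexLt_snoc_iff c v δ a).mp hlex'
      have ha : (a : ℕ) ≤ q - 2 := by
        rcases hcond with h | ⟨he, _⟩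
        · have h1 : (a : ℕ) < (δ : ℕ) := h
          omega
        · exact (show a = δ from he) ▸ hδ
      have hv := (adm_snoc_iff hq v a ha).mp hadm'
      rcases hcond with h | ⟨he, hl⟩
      · exact Or.inl ⟨h, hv⟩
      · exact Or.inr ⟨he, hv, hl⟩
  have hdisj : Disjoint A B := by
    rw [Pi.disjoint_iff]
    intro p
    rw [Prop.disjoint_iff]
    rintro ⟨⟨h1, -⟩, ⟨h2, -⟩⟩
    exact absurd h1 (h2 ▸ lt_irrefl δ)
  have e2 := subtypeOrEquiv A B hdisj
  have eA : {p : Fin q × (Fin m → Fin q) // A p} ≃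
      {a : Fin q // a < δ} × {v : Fin m → Fin q // IsAdmissible q x m v} :=
    @Equiv.subtypeProdEquivProd (Fin q) (Fin m → Fin q) (fun a => a < δ)
      (fun v => IsAdmissible q x m v)
  have eB : {p : Fin q × (Fin m → Fin q) // B p} ≃
      {a : Fin q // a = δ} × {v : Fin m → Fin q // IsAdmissible q x m v ∧ LexLt v c} :=
    @Equiv.subtypeProdEquivProd (Fin q) (Fin m → Fin q) (fun a => a = δ)
      (fun v => IsAdmissible q x m v ∧ LexLt v c)
  have cardlt : Nat.card {a : Fin q // a < δ} = (δ : ℕ) := by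
    have e : {a : Fin q // a < δ} ≃ Fin (δ : ℕ) :=
      { toFun := fun a => ⟨a.1.1, a.2⟩
        invFun := fun b => ⟨⟨b.1, b.2.trans δ.2⟩, b.2⟩
        left_inv := fun a => by ext; rfl
        right_inv := fun b => rfl }
    rw [Nat.card_congr e, Nat.card_eq_fintype_card, Fintype.card_fin]
  have cardeq : Nat.card {a : Fin q // a = δ} = 1 := by
    rw [Nat.card_eq_fintype_card, Fintype.card_subtype_eq]
  calc rankOf q x (m+1) (Fin.snoc c δ)
      = Nat.card {p : Fin q × (Fin m → Fin q) // A p ∨ B p} :=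
        (Nat.card_congr e1).symm
    _ = Nat.card ({p : Fin q × (Fin m → Fin q) // A p} ⊕
          {p : Fin q × (Fin m → Fin q) // B p}) := Nat.card_congr e2
    _ = Nat.card {p : Fin q × (Fin m → Fin q) // A p} +
          Nat.card {p : Fin q × (Fin m → Fin q) // B p} := Nat.card_sum
    _ = (δ : ℕ) * Nadm q x m + rankOf q x m c := by
        rw [Nat.card_congr eA, Nat.card_congr eB, Nat.card_prod, Nat.card_prod,
          cardlt, cardeq, one_mul]
        rfl
end

section
/- Let q ≥ 2, x ≥ 1, and m ≥ 1 be integers, and let c and d be admissible words of length m. Let b be the bridge word of length x: all symbols of b equal q−1 if both the rightmost symbol of c and the leftmost symbol of d equal q−1, and all symbols of b equal 0 otherwise. Then the concatenation c·b·d, a word of length 2m+x, is admissible. -/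
/-- bridging two admissible codewords `c` (written first) and `d` with the
bridge word `b` (all symbols `q-1` if both the rightmost symbol of `c` and the leftmost
symbol of `d` equal `q-1`, all symbols `0` otherwise) yields an admissible word `c·b·d`
of length `2m+x`. -/
theorem stmt_11 (q x m : ℕ) (hq : 2 ≤ q) (hx : 1 ≤ x) (hm : 1 ≤ m)
    (c d : Fin m → Fin q) (hc : IsAdmissible q x m c) (hd : IsAdmissible q x m d)
    (b : Fin q)
    (hb : b = if (c ⟨0, by omega⟩ : ℕ) = q - 1 ∧ (d ⟨m - 1, by omega⟩ : ℕ) = q - 1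
              then (⟨q - 1, by omega⟩ : Fin q) else (⟨0, by omega⟩ : Fin q))
    (w : Fin (2 * m + x) → Fin q)
    (hw1 : ∀ (i : Fin (2 * m + x)) (h : (i : ℕ) < m), w i = d ⟨i, h⟩)
    (hw2 : ∀ i : Fin (2 * m + x), m ≤ (i : ℕ) → (i : ℕ) < m + x → w i = b)
    (hw3 : ∀ (i : Fin (2 * m + x)) (_h : m + x ≤ (i : ℕ)),
      w i = c ⟨(i : ℕ) - (m + x), by have := i.isLt; omega⟩) :
    IsAdmissible q x (2 * m + x) w := by
  intro i r hr1 hr2 h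
  rintro ⟨h1, h2, h3⟩
  -- value-level versions of the structure hypotheses
  have Hd : ∀ (k : ℕ) (hk : k < 2 * m + x) (hk2 : k < m),
      (w ⟨k, hk⟩ : ℕ) = (d ⟨k, hk2⟩ : ℕ) :=
    fun k hk hk2 => congrArg Fin.val (hw1 ⟨k, hk⟩ hk2)
  have Hb : ∀ (k : ℕ) (hk : k < 2 * m + x), m ≤ k → k < m + x →
      (w ⟨k, hk⟩ : ℕ) = (b : ℕ) :=
    fun k hk ha hb' => congrArg Fin.val (hw2 ⟨k, hk⟩ ha hb')
  have Hc : ∀ (k : ℕ) (hk : k < 2 * m + x) (hk2 : m + x ≤ k),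
      (w ⟨k, hk⟩ : ℕ) = (c ⟨k - (m + x), by omega⟩ : ℕ) :=
    fun k hk hk2 => congrArg Fin.val (hw3 ⟨k, hk⟩ hk2)
  have Dcongr : ∀ (a a' : ℕ) (ha : a < m) (ha' : a' < m), a = a' →
      (d ⟨a, ha⟩ : ℕ) = (d ⟨a', ha'⟩ : ℕ) := by
    intro a a' ha ha' hE; subst hE; rfl
  have Ccongr : ∀ (a a' : ℕ) (ha : a < m) (ha' : a' < m), a = a' →
      (c ⟨a, ha⟩ : ℕ) = (c ⟨a', ha'⟩ : ℕ) := by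
    intro a a' ha ha' hE; subst hE; rfl
  -- if the bridge symbol has value q-1 then both boundary symbols are q-1
  have hbq : (b : ℕ) = q - 1 →
      (c ⟨0, by omega⟩ : ℕ) = q - 1 ∧ (d ⟨m - 1, by omega⟩ : ℕ) = q - 1 := by
    intro hv
    rw [hb] at hv
    split at hv
    · assumption
    · simp only [Fin.val_mk] at hv; omega
  rcases lt_or_ge (i + r + 1) m with hA | hA
  · -- entire pattern inside d
    exact hd i r hr1 hr2 hA
      ⟨(Hd (i + r + 1) h hA).symm.trans h1,
       (Hd i (by omega) (by omega)).symm.trans h2,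
       fun j hj1 hj2 =>
         le_of_eq_of_le (Hd (i + j) (by omega) (by omega)).symm (h3 j hj1 hj2)⟩
  rcases lt_or_ge (i + r + 1) (m + x) with hB | hB
  · -- right end of pattern lies in the bridge
    have hbv : (b : ℕ) = q - 1 := (Hb (i + r + 1) h hA hB).symm.trans h1
    obtain ⟨hc0, hdm⟩ := hbq hbv
    rcases lt_or_ge i m with hi | hi
    · rcases lt_or_ge (i + r) m with hir | hir
      · -- i + r + 1 = m : the pattern forces d_{m-1} ≤ q-2, contradicting hdm
        have h3r : (q : ℕ) - 1 ≤ q - 2 :=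
          le_of_eq_of_le hdm.symm
            (le_of_eq_of_le (Dcongr (m - 1) (i + r) (by omega) (by omega) (by omega))
              (le_of_eq_of_le (Hd (i + r) (by omega) (by omega)).symm
                (h3 r hr1 le_rfl)))
        omega
      · -- position m lies strictly inside the pattern and carries b = q-1
        have hmid : (b : ℕ) ≤ q - 2 :=
          le_of_eq_of_le (Hb (i + (m - i)) (by omega) (by omega) (by omega)).symm
            (h3 (m - i) (by omega) (by omega))
        omega
    · -- i itself is in the bridge, so position i+1 is in the bridge
      have hmid : (b : ℕ) ≤ q - 2 :=
        le_of_eq_of_le (Hb (i + 1) (by omega) (by omega) (by omega)).symm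
          (h3 1 le_rfl hr1)
      omega
  · -- right end of pattern lies in c
    have e1 : (c ⟨i + r + 1 - (m + x), by omega⟩ : ℕ) = q - 1 :=
      (Hc (i + r + 1) h hB).symm.trans h1
    rcases lt_or_ge i m with hi | hi
    · -- forces i = m-1, r = x, whole bridge in the middle; bridge must be q-1
      have hdm : (d ⟨m - 1, by omega⟩ : ℕ) = q - 1 :=
        (Dcongr (m - 1) i (by omega) hi (by omega)).trans
          ((Hd i (by omega) hi).symm.trans h2)
      have hc0 : (c ⟨0, by omega⟩ : ℕ) = q - 1 :=
        (Ccongr 0 (i + r + 1 - (m + x)) (by omega) (by omega) (by omega)).trans e1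
      have hbv : (b : ℕ) = q - 1 := by
        rw [hb, if_pos ⟨hc0, hdm⟩]
      have hmid : (b : ℕ) ≤ q - 2 :=
        le_of_eq_of_le (Hb (i + 1) (by omega) (by omega) (by omega)).symm
          (h3 1 le_rfl hr1)
      omega
    rcases lt_or_ge i (m + x) with hib | hib
    · -- i in the bridge with value q-1
      have hbv : (b : ℕ) = q - 1 := (Hb i (by omega) hi hib).symm.trans h2
      obtain ⟨hc0, hdm⟩ := hbq hbv
      rcases lt_or_ge (i + 1) (m + x) with hi1 | hi1
      · have hmid : (b : ℕ) ≤ q - 2 :=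
          le_of_eq_of_le (Hb (i + 1) (by omega) (by omega) hi1).symm
            (h3 1 le_rfl hr1)
        omega
      · -- i = m+x-1 : position i+1 holds c_0 = q-1, but must be ≤ q-2
        have hle : (q : ℕ) - 1 ≤ q - 2 :=
          le_of_eq_of_le hc0.symm
            (le_of_eq_of_le (Ccongr 0 (i + 1 - (m + x)) (by omega) (by omega) (by omega))
              (le_of_eq_of_le (Hc (i + 1) (by omega) (by omega)).symm
                (h3 1 le_rfl hr1)))
        omega
    · -- entire pattern inside c
      exact hc (i - (m + x)) r hr1 hr2 (by omega)
        ⟨(Ccongr (i - (m + x) + r + 1) (i + r + 1 - (m + x)) (by omega) (by omega)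
            (by omega)).trans e1,
         (Hc i (by omega) hib).symm.trans h2,
         fun j hj1 hj2 =>
           le_of_eq_of_le (Ccongr (i - (m + x) + j) (i + j - (m + x)) (by omega)
               (by omega) (by omega))
             (le_of_eq_of_le (Hc (i + j) (by omega) (by omega)).symm (h3 j hj1 hj2))⟩
end

section
/- For all integers q ≥ 2, x ≥ 1, m₁ ≥ 1, and m₂ ≥ 1, the counts of admissible words satisfy N_q(m₁+m₂+x, x) ≥ N_q(m₁,x)·N_q(m₂,x). -/
section Glue

variable (q x m₁ m₂ : ℕ) (hq : 2 ≤ q) (hm₁ : 1 ≤ m₁) (hm₂ : 1 ≤ m₂)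

/-- Glue `w₂` (low part), a pad of length `x`, and `w₁` (high part). The pad is all
`q-1` when both boundary symbols are `q-1`, and all `0` otherwise. -/
def glue (w₁ : Fin m₁ → Fin q) (w₂ : Fin m₂ → Fin q) : Fin (m₁ + m₂ + x) → Fin q :=
  fun k =>
    if h : (k : ℕ) < m₂ then w₂ ⟨k, h⟩
    else if h' : (k : ℕ) < m₂ + x then
      if (w₂ ⟨m₂ - 1, by omega⟩ : ℕ) = q - 1 ∧ (w₁ ⟨0, by omega⟩ : ℕ) = q - 1
      then ⟨q - 1, by omega⟩ else ⟨0, by omega⟩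
    else w₁ ⟨(k : ℕ) - (m₂ + x), by have := k.isLt; omega⟩

variable (w₁ : Fin m₁ → Fin q) (w₂ : Fin m₂ → Fin q)

lemma glue_lo (k : Fin (m₁ + m₂ + x)) (hk : (k : ℕ) < m₂) :
    glue q x m₁ m₂ hq hm₁ hm₂ w₁ w₂ k = w₂ ⟨k, hk⟩ := by
  simp only [glue]; rw [dif_pos hk]

lemma glue_hi (k : Fin (m₁ + m₂ + x)) (hk : m₂ + x ≤ (k : ℕ)) :
    glue q x m₁ m₂ hq hm₁ hm₂ w₁ w₂ k
      = w₁ ⟨(k : ℕ) - (m₂ + x), by have := k.isLt; omega⟩ := by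
  simp only [glue]; rw [dif_neg (by omega), dif_neg (by omega)]

lemma glue_pad_pos (k : Fin (m₁ + m₂ + x)) (hk1 : m₂ ≤ (k : ℕ)) (hk2 : (k : ℕ) < m₂ + x)
    (hc : (w₂ ⟨m₂ - 1, by omega⟩ : ℕ) = q - 1 ∧ (w₁ ⟨0, by omega⟩ : ℕ) = q - 1) :
    (glue q x m₁ m₂ hq hm₁ hm₂ w₁ w₂ k : ℕ) = q - 1 := by
  simp only [glue]; rw [dif_neg (by omega), dif_pos hk2, if_pos hc]

lemma glue_pad_neg (k : Fin (m₁ + m₂ + x)) (hk1 : m₂ ≤ (k : ℕ)) (hk2 : (k : ℕ) < m₂ + x)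
    (hc : ¬((w₂ ⟨m₂ - 1, by omega⟩ : ℕ) = q - 1 ∧ (w₁ ⟨0, by omega⟩ : ℕ) = q - 1)) :
    (glue q x m₁ m₂ hq hm₁ hm₂ w₁ w₂ k : ℕ) = 0 := by
  simp only [glue]; rw [dif_neg (by omega), dif_pos hk2, if_neg hc]

lemma glue_admissible (hx : 1 ≤ x)
    (h₁ : IsAdmissible q x m₁ w₁) (h₂ : IsAdmissible q x m₂ w₂) :
    IsAdmissible q x (m₁ + m₂ + x) (glue q x m₁ m₂ hq hm₁ hm₂ w₁ w₂) := by
  intro i r hr1 hr2 h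
  rintro ⟨htop, hbot, hmid⟩
  by_cases hc : (w₂ ⟨m₂ - 1, by omega⟩ : ℕ) = q - 1 ∧ (w₁ ⟨0, by omega⟩ : ℕ) = q - 1
  · -- pad is all q-1
    rcases lt_or_ge (i + r + 1) m₂ with hA | hA
    · -- internal to w₂
      refine h₂ i r hr1 hr2 hA ⟨?_, ?_, ?_⟩
      · rw [glue_lo q x m₁ m₂ hq hm₁ hm₂ w₁ w₂ ⟨i + r + 1, h⟩ hA] at htop; exact htop
      · rw [glue_lo q x m₁ m₂ hq hm₁ hm₂ w₁ w₂ ⟨i, by omega⟩ (by simpa using by omega : ((⟨i, by omega⟩ : Fin (m₁ + m₂ + x)) : ℕ) < m₂)] at hbot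
        exact hbot
      · intro j hj1 hj2
        have hj : i + j < m₂ := by omega
        have := hmid j hj1 hj2
        rw [glue_lo q x m₁ m₂ hq hm₁ hm₂ w₁ w₂ ⟨i + j, by omega⟩ hj] at this
        exact this
    · rcases le_or_gt (m₂ + x) i with hB | hB
      · -- internal to w₁
        refine h₁ (i - (m₂ + x)) r hr1 hr2 (by omega) ⟨?_, ?_, ?_⟩
        · rw [glue_hi q x m₁ m₂ hq hm₁ hm₂ w₁ w₂ ⟨i + r + 1, h⟩ (by simpa using by omega)] at htop
          convert htop using 3
          simp only [Fin.mk.injEq]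
          omega
        · rw [glue_hi q x m₁ m₂ hq hm₁ hm₂ w₁ w₂ ⟨i, by omega⟩ (by simpa using hB)] at hbot
          exact hbot
        · intro j hj1 hj2
          have := hmid j hj1 hj2
          rw [glue_hi q x m₁ m₂ hq hm₁ hm₂ w₁ w₂ ⟨i + j, by omega⟩ (by simpa using by omega)] at this
          convert this using 3
          simp only [Fin.mk.injEq]
          omega
      · -- a middle symbol has value q - 1 : contradiction
        rcases lt_or_ge i m₂ with hi2 | hi2
        · rcases Nat.lt_or_ge m₂ (i + r + 1) with hT | hT
          · -- position m₂ (pad) is a middle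
            have hj := hmid (m₂ - i) (by omega) (by omega)
            have : (glue q x m₁ m₂ hq hm₁ hm₂ w₁ w₂ ⟨i + (m₂ - i), by omega⟩ : ℕ) = q - 1 :=
              glue_pad_pos q x m₁ m₂ hq hm₁ hm₂ w₁ w₂ _ (by simp; omega) (by simp; omega) hc
            omega
          · -- i + r + 1 = m₂; position m₂ - 1 (top of w₂, = q-1) is a middle
            have hT' : i + r + 1 = m₂ := by omega
            have hj := hmid (m₂ - 1 - i) (by omega) (by omega)
            have : (glue q x m₁ m₂ hq hm₁ hm₂ w₁ w₂ ⟨i + (m₂ - 1 - i), by omega⟩ : ℕ) = q - 1 := by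
              rw [glue_lo q x m₁ m₂ hq hm₁ hm₂ w₁ w₂ _ (by simp; omega)]
              convert hc.1 using 3
              simp; omega
            omega
        · -- i in the pad region
          rcases Nat.lt_or_ge (i + 1) (m₂ + x) with hP | hP
          · -- position i+1 is in the pad
            have hj := hmid 1 le_rfl hr1
            have : (glue q x m₁ m₂ hq hm₁ hm₂ w₁ w₂ ⟨i + 1, by omega⟩ : ℕ) = q - 1 :=
              glue_pad_pos q x m₁ m₂ hq hm₁ hm₂ w₁ w₂ _ (by simp; omega) (by simp; omega) hc
            omega
          · -- i + 1 = m₂ + x ; position m₂+x is w₁ 0 = q-1, and is a middle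
            have hj := hmid 1 le_rfl hr1
            have : (glue q x m₁ m₂ hq hm₁ hm₂ w₁ w₂ ⟨i + 1, by omega⟩ : ℕ) = q - 1 := by
              rw [glue_hi q x m₁ m₂ hq hm₁ hm₂ w₁ w₂ _ (by simp; omega)]
              convert hc.2 using 3
              simp; omega
            omega
  · -- pad is all 0
    rcases lt_or_ge (i + r + 1) m₂ with hA | hA
    · refine h₂ i r hr1 hr2 hA ⟨?_, ?_, ?_⟩
      · rw [glue_lo q x m₁ m₂ hq hm₁ hm₂ w₁ w₂ ⟨i + r + 1, h⟩ hA] at htop; exact htop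
      · rw [glue_lo q x m₁ m₂ hq hm₁ hm₂ w₁ w₂ ⟨i, by omega⟩ (by simpa using by omega : ((⟨i, by omega⟩ : Fin (m₁ + m₂ + x)) : ℕ) < m₂)] at hbot
        exact hbot
      · intro j hj1 hj2
        have hj : i + j < m₂ := by omega
        have := hmid j hj1 hj2
        rw [glue_lo q x m₁ m₂ hq hm₁ hm₂ w₁ w₂ ⟨i + j, by omega⟩ hj] at this
        exact this
    · rcases le_or_gt (m₂ + x) i with hB | hB
      · refine h₁ (i - (m₂ + x)) r hr1 hr2 (by omega) ⟨?_, ?_, ?_⟩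
        · rw [glue_hi q x m₁ m₂ hq hm₁ hm₂ w₁ w₂ ⟨i + r + 1, h⟩ (by simpa using by omega)] at htop
          convert htop using 3
          simp only [Fin.mk.injEq]
          omega
        · rw [glue_hi q x m₁ m₂ hq hm₁ hm₂ w₁ w₂ ⟨i, by omega⟩ (by simpa using hB)] at hbot
          exact hbot
        · intro j hj1 hj2
          have := hmid j hj1 hj2
          rw [glue_hi q x m₁ m₂ hq hm₁ hm₂ w₁ w₂ ⟨i + j, by omega⟩ (by simpa using by omega)] at this
          convert this using 3
          simp only [Fin.mk.injEq]
          omega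
      · rcases lt_or_ge i m₂ with hi2 | hi2
        · rcases Nat.lt_or_ge (i + r + 1) (m₂ + x) with hT | hT
          · -- top endpoint in the pad: value 0 ≠ q-1
            have : (glue q x m₁ m₂ hq hm₁ hm₂ w₁ w₂ ⟨i + r + 1, h⟩ : ℕ) = 0 :=
              glue_pad_neg q x m₁ m₂ hq hm₁ hm₂ w₁ w₂ _ (by simp; omega) (by simp; omega) hc
            omega
          · -- full crossing: forces r = x, i = m₂ - 1, top = m₂ + x
            have hr : r = x := by omega
            have hi : i = m₂ - 1 := by omega
            have ht : i + r + 1 = m₂ + x := by omega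
            refine hc ⟨?_, ?_⟩
            · rw [glue_lo q x m₁ m₂ hq hm₁ hm₂ w₁ w₂ ⟨i, by omega⟩ (by simpa using by omega)] at hbot
              convert hbot using 3
              simp; omega
            · rw [glue_hi q x m₁ m₂ hq hm₁ hm₂ w₁ w₂ ⟨i + r + 1, h⟩ (by simpa using by omega)] at htop
              convert htop using 3
              simp; omega
        · -- bottom endpoint in the pad: value 0 ≠ q-1
          have : (glue q x m₁ m₂ hq hm₁ hm₂ w₁ w₂ ⟨i, by omega⟩ : ℕ) = 0 :=
            glue_pad_neg q x m₁ m₂ hq hm₁ hm₂ w₁ w₂ _ (by simp; omega) (by simp; omega) hc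
          omega

end Glue

/-- supermultiplicativity of the counts of admissible words:
`N_q(m₁+m₂+x, x) ≥ N_q(m₁,x) · N_q(m₂,x)`. -/
theorem stmt_13 (q x m₁ m₂ : ℕ) (hq : 2 ≤ q) (hx : 1 ≤ x) (hm₁ : 1 ≤ m₁) (hm₂ : 1 ≤ m₂) :
    Nadm q x m₁ * Nadm q x m₂ ≤ Nadm q x (m₁ + m₂ + x) := by
  classical
  let f : {w : Fin m₁ → Fin q // IsAdmissible q x m₁ w} ×
      {w : Fin m₂ → Fin q // IsAdmissible q x m₂ w} →
      {w : Fin (m₁ + m₂ + x) → Fin q // IsAdmissible q x (m₁ + m₂ + x) w} :=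
    fun p => ⟨glue q x m₁ m₂ hq hm₁ hm₂ p.1.1 p.2.1,
      glue_admissible q x m₁ m₂ hq hm₁ hm₂ p.1.1 p.2.1 hx p.1.2 p.2.2⟩
  have hf : Function.Injective f := by
    rintro ⟨⟨a1, ha1⟩, ⟨a2, ha2⟩⟩ ⟨⟨b1, hb1⟩, ⟨b2, hb2⟩⟩ hab
    have hab' : glue q x m₁ m₂ hq hm₁ hm₂ a1 a2 = glue q x m₁ m₂ hq hm₁ hm₂ b1 b2 :=
      congrArg Subtype.val hab
    have e2 : a2 = b2 := by
      funext k
      have := congrFun hab' ⟨(k : ℕ), by have := k.isLt; omega⟩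
      rw [glue_lo q x m₁ m₂ hq hm₁ hm₂ a1 a2 _ (by simpa using k.isLt),
        glue_lo q x m₁ m₂ hq hm₁ hm₂ b1 b2 _ (by simpa using k.isLt)] at this
      simpa using this
    have e1 : a1 = b1 := by
      funext k
      have := congrFun hab' ⟨m₂ + x + (k : ℕ), by have := k.isLt; omega⟩
      rw [glue_hi q x m₁ m₂ hq hm₁ hm₂ a1 a2 _ (by simp),
        glue_hi q x m₁ m₂ hq hm₁ hm₂ b1 b2 _ (by simp)] at this
      simpa using this
    simp [Prod.ext_iff, Subtype.ext_iff, e1, e2]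
  calc Nadm q x m₁ * Nadm q x m₂
      = Nat.card ({w : Fin m₁ → Fin q // IsAdmissible q x m₁ w} ×
        {w : Fin m₂ → Fin q // IsAdmissible q x m₂ w}) := (Nat.card_prod _ _).symm
    _ ≤ Nadm q x (m₁ + m₂ + x) := Nat.card_le_card_of_injective f hf
end

section
/- Let q ≥ 2 and x ≥ 1 be integers. Then the limit L = lim_{m→∞} (log₂ N_q(m,x))/m exists, and the asymptotic rate of the self-clocked QA-LOCO code matches it: lim_{m→∞} (log₂(N_q(m,x) − 2))/(m + x) = L. In other words, self-clocked QA-LOCO codes are capacity-achieving for the Q^q_x constraint. -/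
open Filter Topology Real

namespace IsAdmissible

variable {q x m n : ℕ}

theorem of_val_eq_sub_one_unique {w : Fin m → Fin q}
    (hw : ∀ i j, (w i : ℕ) = q - 1 → (w j : ℕ) = q - 1 → i = j) : IsAdmissible q x m w := by
  intro i r _ _ h ⟨hlast, hfirst, _⟩
  have := congrArg Fin.val (hw _ _ hlast hfirst)
  simp only at this
  omega

theorem comp_shift {w : Fin n → Fin q} (hw : IsAdmissible q x n w) {f : Fin m → Fin n} {k : ℕ}
    (hf : ∀ i, (f i : ℕ) = k + i) : IsAdmissible q x m (w ∘ f) := by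
  have hk : ∀ i (hi : i < m), k + i < n := fun i hi => (hf ⟨i, hi⟩).symm ▸ (f ⟨i, hi⟩).isLt
  have hwf : ∀ i (hi : i < m), w (f ⟨i, hi⟩) = w ⟨k + i, hk i hi⟩ :=
    fun i hi => congrArg w (Fin.ext (hf _))
  intro i r hr1 hr2 h ⟨hlast, hfirst, hmid⟩
  refine hw (k + i) r hr1 hr2 (by have := hk _ h; omega) ⟨?_, ?_, fun j hj1 hj2 => ?_⟩
  · simpa only [Function.comp_apply, hwf, ← add_assoc] using hlast
  · simpa only [Function.comp_apply, hwf] using hfirst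
  · simpa only [Function.comp_apply, hwf, ← add_assoc] using hmid j hj1 hj2

end IsAdmissible

theorem succ_le_nadm (q x m : ℕ) (hq : 2 ≤ q) : m + 1 ≤ Nadm q x m := by
  classical
  let mark : Option (Fin m) → Fin m → Fin q := fun o i =>
    if o = some i then ⟨q - 1, by omega⟩ else ⟨0, by omega⟩
  have hmark : ∀ o i, ((mark o i : ℕ) = q - 1 ↔ o = some i) := fun o i => by
    by_cases h : o = some i <;> simp [mark, h]
    omega
  have hinj : Function.Injective mark := fun o o' h =>
    Option.ext fun i => by rw [← hmark o i, ← hmark o' i, h]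
  have hadm : ∀ o, IsAdmissible q x m (mark o) := fun o =>
    IsAdmissible.of_val_eq_sub_one_unique fun i j hi hj =>
      Option.some_injective _ (((hmark o i).mp hi).symm.trans ((hmark o j).mp hj))
  calc m + 1 = Nat.card (Option (Fin m)) := by simp
    _ ≤ Nadm q x m := Nat.card_le_card_of_injective (fun o => ⟨mark o, hadm o⟩)
      fun o o' h => hinj (congrArg Subtype.val h)

theorem nadm_add_le_mul (q x a b : ℕ) : Nadm q x (a + b) ≤ Nadm q x a * Nadm q x b := by
  let split : {w : Fin (a + b) → Fin q // IsAdmissible q x (a + b) w} →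
      {u : Fin a → Fin q // IsAdmissible q x a u} × {v : Fin b → Fin q // IsAdmissible q x b v} :=
    fun w => (⟨w.1 ∘ Fin.castAdd b, w.2.comp_shift (k := 0) fun i => by simp⟩,
      ⟨w.1 ∘ Fin.natAdd a, w.2.comp_shift fun _ => rfl⟩)
  have hsplit : Function.Injective split := by
    intro w w' h
    simp only [split, Prod.mk.injEq, Subtype.mk.injEq] at h
    rw [Subtype.ext_iff, ← Fin.append_castAdd_natAdd (f := w.1),
      ← Fin.append_castAdd_natAdd (f := w'.1)]
    exact congrArg₂ Fin.append h.1 h.2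
  simpa only [Nadm, Nat.card_prod] using Nat.card_le_card_of_injective split hsplit

theorem subadditive_logb_nadm (q x : ℕ) (hq : 2 ≤ q) :
    Subadditive fun m => logb 2 (Nadm q x m) := by
  have hpos : ∀ m, (0 : ℝ) < Nadm q x m := fun m => by
    exact_mod_cast (Nat.succ_pos m).trans_le (succ_le_nadm q x m hq)
  intro a b
  calc logb 2 (Nadm q x (a + b))
      ≤ logb 2 ((Nadm q x a : ℝ) * Nadm q x b) :=
        logb_le_logb_of_le one_lt_two (hpos _) (by exact_mod_cast nadm_add_le_mul q x a b)
    _ = logb 2 (Nadm q x a) + logb 2 (Nadm q x b) := logb_mul (hpos a).ne' (hpos b).ne'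

theorem logb_sub_two_mem_Icc {N : ℝ} (hN : 3 ≤ N) :
    logb 2 (N - 2) ∈ Set.Icc (logb 2 N - logb 2 3) (logb 2 N) := by
  constructor
  · rw [sub_le_iff_le_add, ← logb_mul (sub_pos.mpr (by linarith)).ne' (by norm_num)]
    exact logb_le_logb_of_le one_lt_two (by linarith) (by linarith)
  · exact logb_le_logb_of_le one_lt_two (by linarith) (by linarith)

theorem Filter.Tendsto.div_of_sub_mem_Icc {α : Type*} {l : Filter α} {u v d : α → ℝ} {L : ℝ}
    (hu : Tendsto (fun a => u a / d a) l (𝓝 L)) (hd : Tendsto d l atTop) (C : ℝ)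
    (hv : ∀ᶠ a in l, v a ∈ Set.Icc (u a - C) (u a)) :
    Tendsto (fun a => v a / d a) l (𝓝 L) := by
  have hlower : Tendsto (fun a => u a / d a - C / d a) l (𝓝 L) := by
    simpa using hu.sub (tendsto_const_nhds.div_atTop hd)
  refine tendsto_of_tendsto_of_tendsto_of_le_of_le' hlower hu ?_ ?_ <;>
    filter_upwards [hv, hd.eventually_gt_atTop 0] with a ⟨hlo, hhi⟩ hda
  · rw [← sub_div]
    exact div_le_div_of_nonneg_right hlo hda.le
  · exact div_le_div_of_nonneg_right hhi hda.le

theorem Filter.Tendsto.div_natCast_add {u : ℕ → ℝ} {L : ℝ}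
    (hu : Tendsto (fun m => u m / m) atTop (𝓝 L)) (c : ℝ) :
    Tendsto (fun m => u m / (m + c)) atTop (𝓝 L) := by
  have h := hu.mul (tendsto_natCast_div_add_atTop c)
  rw [mul_one] at h
  refine h.congr' ?_
  filter_upwards [eventually_ne_atTop 0] with m hm
  rw [div_mul_div_cancel₀ (by exact_mod_cast hm)]

theorem stmt_14_general (q x : ℕ) (hq : 2 ≤ q) :
    ∃ L : ℝ,
      Tendsto (fun m : ℕ => Real.logb 2 (Nadm q x m) / m) atTop (nhds L) ∧
      Tendsto (fun m : ℕ => Real.logb 2 ((Nadm q x m : ℝ) - 2) / ((m : ℝ) + x)) atTop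
        (nhds L) := by
  have hN : ∀ m : ℕ, (m : ℝ) + 1 ≤ Nadm q x m := fun m => by
    exact_mod_cast succ_le_nadm q x m hq
  have hsub := subadditive_logb_nadm q x hq
  have hcap := hsub.tendsto_lim ⟨0, by
    rintro _ ⟨m, rfl⟩
    exact div_nonneg (logb_nonneg one_lt_two (by linarith [hN m, m.cast_nonneg (α := ℝ)]))
      m.cast_nonneg⟩
  refine ⟨hsub.lim, hcap, (hcap.div_natCast_add x).div_of_sub_mem_Icc
    (tendsto_atTop_add_const_right _ _ tendsto_natCast_atTop_atTop) (logb 2 3) ?_⟩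
  filter_upwards [eventually_ge_atTop 2] with m hm
  exact logb_sub_two_mem_Icc (by linarith [hN m, (Nat.ofNat_le_cast.mpr hm : (2 : ℝ) ≤ m)])

open Filter Real in
/-- the limit `L = lim_m (log₂ N_q(m,x))/m` exists and the asymptotic rate of
the self-clocked QA-LOCO code, `lim_m (log₂(N_q(m,x) - 2))/(m + x)`, matches it: self-clocked
QA-LOCO codes are capacity-achieving for the `Q^q_x` constraint. -/
theorem stmt_14 (q x : ℕ) (hq : 2 ≤ q) (hx : 1 ≤ x) :
    ∃ L : ℝ,
      Tendsto (fun m : ℕ => Real.logb 2 (Nadm q x m) / m) atTop (nhds L) ∧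
      Tendsto (fun m : ℕ => Real.logb 2 ((Nadm q x m : ℝ) - 2) / ((m : ℝ) + x)) atTop
        (nhds L) :=
  stmt_14_general q x hq
end
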